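/- arXiv:2203.00178 — 3 statements merged into one kernel-verified Lean document; each statement's English description precedes it below -/
import Mathlib

section
/- Let 0 < ν < μ and δ > 0, set λ(t) = 2δ − δ|t|^{−ν} for |t| ≥ 1 and ζ₃(t,x,ξ) = χ₂((q₀(x,ξ) − 1)/λ(t)). Then there exists a constant C′ > 0 (depending only on n, C, C₀, c₀, δ, ν and χ₂) such that for all (t,x,τ,ξ) with |t| ≥ 1: |{q, ζ₃}(t,x,τ,ξ)| ≤ C′ |χ₂′((q₀(x,ξ) − 1)/λ(t))| (1 + |τ| + |ξ|)³ ⟨t⟩^{−1−μ}. -/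
open Real
open scoped RealInnerProductSpace

noncomputable section

/-- `ℝⁿ` as a Euclidean space. -/
abbrev En (n : ℕ) := EuclideanSpace ℝ (Fin n)

/-- The Japanese bracket `⟨t⟩ = (1+t²)^{1/2}`. -/
def jap (t : ℝ) : ℝ := Real.sqrt (1 + t ^ 2)

/-- The Poisson bracket
`{a,b} = (∂_τ a)(∂_t b) + ∂_ξ a · ∂_x b − (∂_t a)(∂_τ b) − ∂_x a · ∂_ξ b`
of two functions of `(t,x,τ,ξ) ∈ ℝ × ℝⁿ × ℝ × ℝⁿ`. -/
def pb (n : ℕ) (a b : ℝ → En n → ℝ → En n → ℝ)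
    (t : ℝ) (x : En n) (τ : ℝ) (ξ : En n) : ℝ :=
  deriv (fun σ => a t x σ ξ) τ * deriv (fun s => b s x τ ξ) t
    + ⟪gradient (fun η => a t x τ η) ξ, gradient (fun y => b t y τ ξ) x⟫
    - deriv (fun s => a s x τ ξ) t * deriv (fun σ => b t x σ ξ) τ
    - ⟪gradient (fun y => a t y τ ξ) x, gradient (fun η => b t x τ η) ξ⟫

/-- The incoming width function `λ(t) = 2δ − δ|t|^{−ν}`. -/
def lamIn (δ ν t : ℝ) : ℝ := 2 * δ - δ * |t| ^ (-ν)

lemma gradComp {E : Type*} [NormedAddCommGroup E] [InnerProductSpace ℝ E] [CompleteSpace E]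
    {f : E → ℝ} {x : E} {g : ℝ → ℝ} {g' : ℝ} (hf : DifferentiableAt ℝ f x)
    (hg : HasDerivAt g g' (f x)) :
    HasGradientAt (fun y => g (f y)) (g' • gradient f x) x := by
  have h1 : HasFDerivAt f (InnerProductSpace.toDual ℝ E (gradient f x)) x :=
    hf.hasGradientAt.hasFDerivAt
  have h2 := hg.comp_hasFDerivAt x h1
  rw [hasGradientAt_iff_hasFDerivAt]
  convert h2 using 2
  ext v
  simp [InnerProductSpace.toDual_apply_apply, real_inner_smul_left]
  · rfl
  · exact map_smul _ _ _

lemma lamIn_bounds {δ ν t : ℝ} (hδ : 0 < δ) (hν : 0 < ν) (ht : 1 ≤ |t|) :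
    δ ≤ lamIn δ ν t ∧ lamIn δ ν t ≤ 2 * δ := by
  have h0 : (0:ℝ) ≤ |t| ^ (-ν) := Real.rpow_nonneg (abs_nonneg t) _
  have h1 : |t| ^ (-ν) ≤ 1 :=
    Real.rpow_le_one_of_one_le_of_nonpos ht (by linarith)
  unfold lamIn
  constructor <;> nlinarith

lemma lamIn_hasDerivAt {δ ν t : ℝ} (hδ : 0 < δ) (hν : 0 < ν) (ht : 1 ≤ |t|) :
    ∃ L, HasDerivAt (lamIn δ ν) L t ∧ |L| ≤ δ * ν := by
  rcases le_abs'.mp ht with h | h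
  · have ht0 : t < 0 := by linarith
    have hnt : (1:ℝ) ≤ -t := by linarith
    have h1 : HasDerivAt (fun y : ℝ => y ^ (-ν)) (-ν * (-t) ^ (-ν - 1)) (-t) :=
      Real.hasDerivAt_rpow_const (Or.inl (by linarith))
    have hneg : HasDerivAt (fun s : ℝ => -s) (-1) t := (hasDerivAt_id t).neg
    have hcomp : HasDerivAt (fun s : ℝ => (-s) ^ (-ν)) ((-ν * (-t) ^ (-ν - 1)) * (-1)) t := by
      have := HasDerivAt.comp t h1 hneg
      simpa [Function.comp_def] using this
    have h2 : HasDerivAt (fun s : ℝ => 2 * δ - δ * (-s) ^ (-ν))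
        (0 - (δ * ((-ν * (-t) ^ (-ν - 1)) * (-1)))) t :=
      (hasDerivAt_const t (2 * δ)).sub (hcomp.const_mul δ)
    have hev : lamIn δ ν =ᶠ[nhds t] (fun s => 2 * δ - δ * (-s) ^ (-ν)) := by
      filter_upwards [eventually_lt_nhds ht0] with s hs
      simp [lamIn, abs_of_neg hs]
    refine ⟨_, h2.congr_of_eventuallyEq hev, ?_⟩
    have hr0 : (0:ℝ) ≤ (-t) ^ (-ν - 1) := Real.rpow_nonneg (by linarith) _
    have hr1 : (-t) ^ (-ν - 1) ≤ 1 :=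
      Real.rpow_le_one_of_one_le_of_nonpos hnt (by linarith)
    rw [show 0 - (δ * ((-ν * (-t) ^ (-ν - 1)) * (-1))) = -(δ * (ν * (-t) ^ (-ν - 1))) by ring,
      abs_neg, abs_of_nonneg (by positivity)]
    nlinarith [mul_le_mul_of_nonneg_left hr1 (by positivity : (0:ℝ) ≤ δ * ν)]
  · have ht0 : 0 < t := by linarith
    have h1 : HasDerivAt (fun s : ℝ => s ^ (-ν)) (-ν * t ^ (-ν - 1)) t :=
      Real.hasDerivAt_rpow_const (Or.inl (by linarith))
    have h2 : HasDerivAt (fun s : ℝ => 2 * δ - δ * s ^ (-ν))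
        (0 - (δ * (-ν * t ^ (-ν - 1)))) t :=
      (hasDerivAt_const t (2 * δ)).sub (h1.const_mul δ)
    have hev : lamIn δ ν =ᶠ[nhds t] (fun s => 2 * δ - δ * s ^ (-ν)) := by
      filter_upwards [eventually_gt_nhds ht0] with s hs
      simp [lamIn, abs_of_pos hs]
    refine ⟨_, h2.congr_of_eventuallyEq hev, ?_⟩
    have hr0 : (0:ℝ) ≤ t ^ (-ν - 1) := Real.rpow_nonneg (by linarith) _
    have hr1 : t ^ (-ν - 1) ≤ 1 :=
      Real.rpow_le_one_of_one_le_of_nonpos h (by linarith)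
    rw [show 0 - (δ * (-ν * t ^ (-ν - 1))) = δ * (ν * t ^ (-ν - 1)) by ring,
      abs_of_nonneg (by positivity)]
    nlinarith [mul_le_mul_of_nonneg_left hr1 (by positivity : (0:ℝ) ≤ δ * ν)]

lemma chi_deriv_zero {χ₂ : ℝ → ℝ} (hχ₂zero : ∀ s : ℝ, 2 ≤ |s| → χ₂ s = 0)
    {u : ℝ} (hu : 2 < |u|) : deriv χ₂ u = 0 := by
  have hev : χ₂ =ᶠ[nhds u] (fun _ => 0) := by
    have hopen : IsOpen {s : ℝ | 2 < |s|} := isOpen_lt continuous_const continuous_abs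
    filter_upwards [hopen.mem_nhds hu] with s hs
    exact hχ₂zero s (le_of_lt hs)
  rw [hev.deriv_eq, deriv_const]

lemma chi_u_deriv {χ₂ : ℝ → ℝ} (hχ₂zero : ∀ s : ℝ, 2 ≤ |s| → χ₂ s = 0) (u : ℝ) :
    |u| * |deriv χ₂ u| ≤ 2 * |deriv χ₂ u| := by
  rcases le_or_gt |u| 2 with h | h
  · exact mul_le_mul_of_nonneg_right h (abs_nonneg _)
  · rw [chi_deriv_zero hχ₂zero h]; simp


lemma helperA (C J B Dv ν : ℝ) (hC : 0 ≤ C) (hJ : 0 ≤ J) (hν : 0 ≤ ν)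
    (hD : 0 ≤ Dv) (hB : 1 ≤ B) :
    C * J * B * (2 * ν * Dv) ≤ 2 * ν * C * (Dv * B ^ 3 * J) := by
  have hB0 : (0:ℝ) ≤ B := by linarith
  have h1 : B ≤ B ^ 3 := by
    nlinarith [mul_nonneg (mul_nonneg hB0 (sub_nonneg.mpr hB)) (by linarith : (0:ℝ) ≤ B + 1)]
  calc C * J * B * (2 * ν * Dv) = (2 * ν * C * J * Dv) * B := by ring
    _ ≤ (2 * ν * C * J * Dv) * B ^ 3 := by
        have : (0:ℝ) ≤ 2 * ν * C * J * Dv := by positivity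
        nlinarith
    _ = 2 * ν * C * (Dv * B ^ 3 * J) := by ring

lemma helperB (C J B Dv δ C₀ ξn : ℝ) (hC : 0 ≤ C) (hJ : 0 ≤ J) (hδ : 0 < δ)
    (hC₀ : 0 ≤ C₀) (hD : 0 ≤ Dv) (hξ : 0 ≤ ξn) (hξB : ξn ≤ B) (hB : 1 ≤ B) :
    C * J * B * (Dv * (1 / δ) * (C₀ * ξn ^ 2)) ≤ C * C₀ / δ * (Dv * B ^ 3 * J) := by
  have hB0 : (0:ℝ) ≤ B := by linarith
  have h1 : B * ξn ^ 2 ≤ B ^ 3 := by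
    have h2 : ξn ^ 2 ≤ B ^ 2 := by nlinarith
    nlinarith [mul_le_mul_of_nonneg_left h2 hB0]
  calc C * J * B * (Dv * (1 / δ) * (C₀ * ξn ^ 2))
      = (C * J * Dv * C₀ / δ) * (B * ξn ^ 2) := by ring
    _ ≤ (C * J * Dv * C₀ / δ) * B ^ 3 := by
        have : (0:ℝ) ≤ C * J * Dv * C₀ / δ := by positivity
        nlinarith
    _ = C * C₀ / δ * (Dv * B ^ 3 * J) := by ring

lemma helperD (C J B Dv δ C₀ ξn : ℝ) (hC : 0 ≤ C) (hJ : 0 ≤ J) (hδ : 0 < δ)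
    (hC₀ : 0 ≤ C₀) (hD : 0 ≤ Dv) (hξ : 0 ≤ ξn) (hξB : ξn ≤ B) (hB : 1 ≤ B) :
    C * J * B ^ 2 * (Dv * (1 / δ) * (C₀ * ξn)) ≤ C * C₀ / δ * (Dv * B ^ 3 * J) := by
  have hB0 : (0:ℝ) ≤ B := by linarith
  have h1 : B ^ 2 * ξn ≤ B ^ 3 := by nlinarith
  calc C * J * B ^ 2 * (Dv * (1 / δ) * (C₀ * ξn))
      = (C * J * Dv * C₀ / δ) * (B ^ 2 * ξn) := by ring
    _ ≤ (C * J * Dv * C₀ / δ) * B ^ 3 := by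
        have : (0:ℝ) ≤ C * J * Dv * C₀ / δ := by positivity
        nlinarith
    _ = C * C₀ / δ * (Dv * B ^ 3 * J) := by ring

lemma helperFinal (A B2 D4 K1 K2 P : ℝ) (hA : |A| ≤ K1 * P) (h2 : |B2| ≤ K2 * P)
    (h3 : |D4| ≤ K2 * P) (hP : 0 ≤ P) :
    |A + B2 - D4| ≤ (K1 + 2 * K2 + 1) * P := by
  have e1 := abs_le.mp hA
  have e2 := abs_le.mp h2
  have e3 := abs_le.mp h3
  rw [abs_le]
  constructor <;> nlinarith

set_option maxHeartbeats 1000000 in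

set_option maxHeartbeats 1000000 in
/-- estimate (2.2) in the proof of Lemma 2.3: with
`ζ₃(t,x,ξ) = χ₂((q₀(x,ξ)−1)/λ(t))`, there is `C′ > 0` such that for `|t| ≥ 1`,
`|{q, ζ₃}| ≤ C′ |χ₂′((q₀−1)/λ(t))| (1+|τ|+|ξ|)³ ⟨t⟩^{−1−μ}`. -/
theorem stmt11 (n : ℕ) (hn : 1 ≤ n) (μ C C₀ c₀ ν δ : ℝ) (hμ : 0 < μ) (hC : 0 < C)
    (hC₀ : 0 < C₀) (hc₀ : 0 < c₀) (hν : 0 < ν) (hνμ : ν < μ) (hδ : 0 < δ)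
    (q₀ : En n → En n → ℝ)
    (hq₀smooth : ContDiff ℝ (⊤ : ℕ∞) (fun v : En n × En n => q₀ v.1 v.2))
    (hq₀ell : ∀ x ξ, c₀ * ‖ξ‖ ^ 2 ≤ q₀ x ξ) (hq₀ub : ∀ x ξ, q₀ x ξ ≤ C₀ * ‖ξ‖ ^ 2)
    (hdxq₀ : ∀ x ξ, ‖gradient (fun y => q₀ y ξ) x‖ ≤ C₀ * ‖ξ‖ ^ 2)
    (hdξq₀ : ∀ x ξ, ‖gradient (fun η => q₀ x η) ξ‖ ≤ C₀ * ‖ξ‖)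
    (q : ℝ → En n → ℝ → En n → ℝ)
    (hqsmooth : ContDiff ℝ (⊤ : ℕ∞) (fun v : ℝ × En n × ℝ × En n => q v.1 v.2.1 v.2.2.1 v.2.2.2))
    (hdxq : ∀ t x τ ξ, ‖gradient (fun y => q t y τ ξ) x‖
      ≤ C * jap t ^ (-1 - μ) * (τ ^ 2 + ‖ξ‖ ^ 2))
    (hdτξq : ∀ t x τ ξ, |deriv (fun σ => q t x σ ξ) τ| + ‖gradient (fun η => q t x τ η) ξ‖
      ≤ C * jap t ^ (-1 - μ) * (|τ| + ‖ξ‖))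
    (χ₂ : ℝ → ℝ) (hχ₂smooth : ContDiff ℝ (⊤ : ℕ∞) χ₂)
    (hχ₂one : ∀ s : ℝ, |s| ≤ 1 → χ₂ s = 1) (hχ₂zero : ∀ s : ℝ, 2 ≤ |s| → χ₂ s = 0)
    (hχ₂mono : ∀ s, s * deriv χ₂ s ≤ 0) :
    ∃ C' > (0 : ℝ), ∀ (t : ℝ) (x : En n) (τ : ℝ) (ξ : En n), 1 ≤ |t| →
      |pb n q (fun s y _ η => χ₂ ((q₀ y η - 1) / lamIn δ ν s)) t x τ ξ|
        ≤ C' * |deriv χ₂ ((q₀ x ξ - 1) / lamIn δ ν t)| * (1 + |τ| + ‖ξ‖) ^ 3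
            * jap t ^ (-1 - μ) := by
  have hχd : Differentiable ℝ χ₂ := hχ₂smooth.differentiable (by simp)
  have hq₀d : Differentiable ℝ (fun v : En n × En n => q₀ v.1 v.2) :=
    hq₀smooth.differentiable (by simp)
  refine ⟨2 * ν * C + 2 * (C * C₀ / δ) + 1, by positivity, ?_⟩
  intro t x τ ξ ht
  obtain ⟨hlamlo, hlamhi⟩ := lamIn_bounds hδ hν ht
  have hlampos : 0 < lamIn δ ν t := lt_of_lt_of_le hδ hlamlo
  have hJpos : 0 < jap t ^ (-1 - μ) := by
    apply Real.rpow_pos_of_pos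
    unfold jap
    exact Real.sqrt_pos.mpr (by positivity)
  set J := jap t ^ (-1 - μ) with hJdef
  set u := (q₀ x ξ - 1) / lamIn δ ν t with hudef
  set D := |deriv χ₂ u| with hDdef
  have hDnn : 0 ≤ D := abs_nonneg _
  have hB0 : (0:ℝ) ≤ 1 + |τ| + ‖ξ‖ := by positivity
  have hB1 : (1:ℝ) ≤ 1 + |τ| + ‖ξ‖ := by
    have := abs_nonneg τ; have := norm_nonneg ξ; linarith
  have hBB3 : (1 + |τ| + ‖ξ‖) ≤ (1 + |τ| + ‖ξ‖) ^ 3 := by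
    nlinarith [mul_nonneg (mul_nonneg (sub_nonneg.mpr hB1) hB0)
      (add_nonneg hB0 zero_le_one)]
  have hξB : ‖ξ‖ ≤ 1 + |τ| + ‖ξ‖ := by have := abs_nonneg τ; linarith
  -- bounds on q derivatives
  have hqτ : |deriv (fun σ => q t x σ ξ) τ| ≤ C * J * (1 + |τ| + ‖ξ‖) := by
    have h := hdτξq t x τ ξ
    have h2 : |deriv (fun σ => q t x σ ξ) τ| ≤ C * J * (|τ| + ‖ξ‖) := by
      have := norm_nonneg (gradient (fun η => q t x τ η) ξ); linarith
    refine h2.trans ?_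
    have : |τ| + ‖ξ‖ ≤ 1 + |τ| + ‖ξ‖ := by linarith
    nlinarith [mul_le_mul_of_nonneg_left this (by positivity : (0:ℝ) ≤ C * J)]
  have hqξ : ‖gradient (fun η => q t x τ η) ξ‖ ≤ C * J * (1 + |τ| + ‖ξ‖) := by
    have h := hdτξq t x τ ξ
    have h2 : ‖gradient (fun η => q t x τ η) ξ‖ ≤ C * J * (|τ| + ‖ξ‖) := by
      have := abs_nonneg (deriv (fun σ => q t x σ ξ) τ); linarith
    refine h2.trans ?_
    have : |τ| + ‖ξ‖ ≤ 1 + |τ| + ‖ξ‖ := by linarith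
    nlinarith [mul_le_mul_of_nonneg_left this (by positivity : (0:ℝ) ≤ C * J)]
  have hqx : ‖gradient (fun y => q t y τ ξ) x‖ ≤ C * J * (1 + |τ| + ‖ξ‖) ^ 2 := by
    refine (hdxq t x τ ξ).trans ?_
    have h2 : τ ^ 2 + ‖ξ‖ ^ 2 ≤ (1 + |τ| + ‖ξ‖) ^ 2 := by
      nlinarith [abs_nonneg τ, norm_nonneg ξ, sq_abs τ]
    nlinarith [mul_le_mul_of_nonneg_left h2 (by positivity : (0:ℝ) ≤ C * J)]
  -- differentiability of partial maps of q₀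
  have hfx : DifferentiableAt ℝ (fun y => q₀ y ξ) x := by
    have := (hq₀d (x, ξ)).comp x ((differentiableAt_id (𝕜 := ℝ) (x := x)).prodMk (differentiableAt_const ξ))
    simpa [Function.comp_def] using this
  have hfξ : DifferentiableAt ℝ (fun η => q₀ x η) ξ := by
    have := (hq₀d (x, ξ)).comp ξ ((differentiableAt_const x).prodMk differentiableAt_id)
    simpa [Function.comp_def] using this
  -- the outer scalar derivative
  have hgscal : HasDerivAt (fun s : ℝ => χ₂ ((s - 1) / lamIn δ ν t))
      (deriv χ₂ u * (1 / lamIn δ ν t)) (q₀ x ξ) := by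
    have hi : HasDerivAt (fun s : ℝ => (s - 1) / lamIn δ ν t) (1 / lamIn δ ν t) (q₀ x ξ) := by
      simpa using ((hasDerivAt_id (q₀ x ξ)).sub_const 1).div_const (lamIn δ ν t)
    have hc := (hχd ((q₀ x ξ - 1) / lamIn δ ν t)).hasDerivAt
    have := hc.comp (q₀ x ξ) hi
    simpa [Function.comp_def] using this
  -- gradient in x of ζ₃
  have hgradx : HasGradientAt (fun y => χ₂ ((q₀ y ξ - 1) / lamIn δ ν t))
      ((deriv χ₂ u * (1 / lamIn δ ν t)) • gradient (fun y => q₀ y ξ) x) x :=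
    gradComp (f := fun y => q₀ y ξ) (g := fun s : ℝ => χ₂ ((s - 1) / lamIn δ ν t)) hfx hgscal
  have hgxnorm : ‖gradient (fun y => χ₂ ((q₀ y ξ - 1) / lamIn δ ν t)) x‖
      ≤ D * (1 / δ) * (C₀ * ‖ξ‖ ^ 2) := by
    rw [hgradx.gradient, norm_smul, Real.norm_eq_abs, abs_mul,
      abs_of_pos (one_div_pos.mpr hlampos)]
    have h1 : D * (1 / lamIn δ ν t) ≤ D * (1 / δ) :=
      mul_le_mul_of_nonneg_left (one_div_le_one_div_of_le hδ hlamlo) hDnn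
    exact mul_le_mul h1 (hdxq₀ x ξ) (norm_nonneg _) (by positivity)
  -- gradient in ξ of ζ₃
  have hgradξ : HasGradientAt (fun η => χ₂ ((q₀ x η - 1) / lamIn δ ν t))
      ((deriv χ₂ u * (1 / lamIn δ ν t)) • gradient (fun η => q₀ x η) ξ) ξ :=
    gradComp (f := fun η => q₀ x η) (g := fun s : ℝ => χ₂ ((s - 1) / lamIn δ ν t)) hfξ hgscal
  have hgξnorm : ‖gradient (fun η => χ₂ ((q₀ x η - 1) / lamIn δ ν t)) ξ‖
      ≤ D * (1 / δ) * (C₀ * ‖ξ‖) := by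
    rw [hgradξ.gradient, norm_smul, Real.norm_eq_abs, abs_mul,
      abs_of_pos (one_div_pos.mpr hlampos)]
    have h1 : D * (1 / lamIn δ ν t) ≤ D * (1 / δ) :=
      mul_le_mul_of_nonneg_left (one_div_le_one_div_of_le hδ hlamlo) hDnn
    exact mul_le_mul h1 (hdξq₀ x ξ) (norm_nonneg _) (by positivity)
  -- t-derivative of ζ₃
  obtain ⟨L, hlamD, hLbd⟩ := lamIn_hasDerivAt hδ hν ht
  have hquot : HasDerivAt (fun s => (q₀ x ξ - 1) / lamIn δ ν s)
      ((0 * lamIn δ ν t - (q₀ x ξ - 1) * L) / lamIn δ ν t ^ 2) t :=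
    (hasDerivAt_const t (q₀ x ξ - 1)).div hlamD (ne_of_gt hlampos)
  have hct : HasDerivAt (fun s => χ₂ ((q₀ x ξ - 1) / lamIn δ ν s))
      (deriv χ₂ u * ((0 * lamIn δ ν t - (q₀ x ξ - 1) * L) / lamIn δ ν t ^ 2)) t := by
    have hc := (hχd ((q₀ x ξ - 1) / lamIn δ ν t)).hasDerivAt
    have := hc.comp t hquot
    simpa [Function.comp_def] using this
  have hdtbd : |deriv (fun s => χ₂ ((q₀ x ξ - 1) / lamIn δ ν s)) t| ≤ 2 * ν * D := by
    rw [hct.deriv]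
    have hcu : q₀ x ξ - 1 = u * lamIn δ ν t := (div_mul_cancel₀ _ (ne_of_gt hlampos)).symm
    have habs : |deriv χ₂ u * ((0 * lamIn δ ν t - (q₀ x ξ - 1) * L) / lamIn δ ν t ^ 2)|
        = D * ((|u| * lamIn δ ν t * |L|) / lamIn δ ν t ^ 2) := by
      rw [abs_mul, abs_div, abs_of_pos (pow_pos hlampos 2)]
      congr 1
      rw [show 0 * lamIn δ ν t - (q₀ x ξ - 1) * L = -((q₀ x ξ - 1) * L) by ring, abs_neg,
        abs_mul, hcu, abs_mul, abs_of_pos hlampos]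
    rw [habs, mul_div_assoc' ]
    rw [div_le_iff₀ (pow_pos hlampos 2)]
    have h6 : |u| * D ≤ 2 * D := chi_u_deriv hχ₂zero u
    have h7 : |L| ≤ ν * lamIn δ ν t := by nlinarith [hLbd]
    nlinarith [mul_le_mul (mul_le_mul_of_nonneg_right h6 hlampos.le)
        h7 (abs_nonneg L) (by positivity : (0:ℝ) ≤ 2 * D * lamIn δ ν t),
      abs_nonneg u, abs_nonneg L]
  -- assemble
  simp only [pb, deriv_const', mul_zero, sub_zero]
  have hA : |deriv (fun σ => q t x σ ξ) τ * deriv (fun s => χ₂ ((q₀ x ξ - 1) / lamIn δ ν s)) t|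
      ≤ 2 * ν * C * (D * (1 + |τ| + ‖ξ‖) ^ 3 * J) := by
    rw [abs_mul]
    have h1 := mul_le_mul hqτ hdtbd (abs_nonneg _) (by positivity)
    refine h1.trans ?_
    exact helperA C J (1 + |τ| + ‖ξ‖) D ν hC.le hJpos.le hν.le hDnn hB1
  have hB2 : |⟪gradient (fun η => q t x τ η) ξ,
        gradient (fun y => χ₂ ((q₀ y ξ - 1) / lamIn δ ν t)) x⟫|
      ≤ C * C₀ / δ * (D * (1 + |τ| + ‖ξ‖) ^ 3 * J) := by
    refine (abs_real_inner_le_norm _ _).trans ?_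
    have h1 := mul_le_mul hqξ hgxnorm (norm_nonneg _) (by positivity)
    refine h1.trans ?_
    exact helperB C J (1 + |τ| + ‖ξ‖) D δ C₀ ‖ξ‖ hC.le hJpos.le hδ hC₀.le hDnn
      (norm_nonneg ξ) hξB hB1
  have hD4 : |⟪gradient (fun y => q t y τ ξ) x,
        gradient (fun η => χ₂ ((q₀ x η - 1) / lamIn δ ν t)) ξ⟫|
      ≤ C * C₀ / δ * (D * (1 + |τ| + ‖ξ‖) ^ 3 * J) := by
    refine (abs_real_inner_le_norm _ _).trans ?_
    have h1 := mul_le_mul hqx hgξnorm (norm_nonneg _) (by positivity)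
    refine h1.trans ?_
    exact helperD C J (1 + |τ| + ‖ξ‖) D δ C₀ ‖ξ‖ hC.le hJpos.le hδ hC₀.le hDnn
      (norm_nonneg ξ) hξB hB1
  have hP : (0:ℝ) ≤ D * (1 + |τ| + ‖ξ‖) ^ 3 * J := by positivity
  have hfin := helperFinal _ _ _ _ _ _ hA hB2 hD4 hP
  refine hfin.trans (le_of_eq ?_)
  ring
end
end

section
/- Let 0 < ν < μ and 0 < δ ≤ 1/16, and set λ(t) = δ + δ|t|^{−ν} for |t| ≥ 1 and ζ₂⁺(t,τ) = χ₂((τ − 1)/λ(t)). For every R > 0 there exists T₀ ≥ 1 such that for all (t,x,τ,ξ) with t ≥ T₀ and |ξ| ≤ R one has −{τ² + q, ζ₂⁺}(t,x,τ,ξ) ≥ 0. -/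
open Real
open scoped RealInnerProductSpace

set_option maxHeartbeats 1000000
noncomputable section

/-- The outgoing width function `λ(t) = δ + δ|t|^{−ν}`. -/
def lamOut (δ ν t : ℝ) : ℝ := δ + δ * |t| ^ (-ν)

/-- If `χ₂ = 1` on `|s| ≤ 1` then its derivative vanishes for `|s| < 1`. -/
lemma deriv_zero_of_lt_one (χ₂ : ℝ → ℝ) (hχ₂one : ∀ s : ℝ, |s| ≤ 1 → χ₂ s = 1)
    {s : ℝ} (hs : |s| < 1) : deriv χ₂ s = 0 := by
  have hmem : {x : ℝ | |x| < 1} ∈ nhds s :=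
    (isOpen_lt continuous_abs continuous_const).mem_nhds hs
  have h : χ₂ =ᶠ[nhds s] fun _ => (1:ℝ) :=
    Filter.eventually_of_mem hmem fun x hx => hχ₂one x (le_of_lt hx)
  rw [h.deriv_eq]; exact deriv_const _ _

/-- If a `C^∞` function vanishes on `2 ≤ |s|` then so does its derivative. -/
lemma deriv_zero_of_two_le (χ₂ : ℝ → ℝ) (hsm : ContDiff ℝ (⊤ : ℕ∞) χ₂)
    (hz : ∀ s : ℝ, 2 ≤ |s| → χ₂ s = 0) : ∀ s : ℝ, 2 ≤ |s| → deriv χ₂ s = 0 := by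
  have hopen : ∀ s : ℝ, 2 < |s| → deriv χ₂ s = 0 := by
    intro s hs
    have hmem : {x : ℝ | 2 < |x|} ∈ nhds s :=
      (isOpen_lt continuous_const continuous_abs).mem_nhds hs
    have h : χ₂ =ᶠ[nhds s] fun _ => (0:ℝ) :=
      Filter.eventually_of_mem hmem fun x hx => hz x (le_of_lt hx)
    rw [h.deriv_eq]; exact deriv_const _ _
  have hc : Continuous (deriv χ₂) := hsm.continuous_deriv (by simp)
  have htwo : deriv χ₂ 2 = 0 := by
    have h1 : Filter.Tendsto (deriv χ₂) (nhdsWithin 2 (Set.Ioi 2)) (nhds (deriv χ₂ 2)) :=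
      (hc.continuousAt).continuousWithinAt
    have h2' : Filter.Tendsto (deriv χ₂) (nhdsWithin 2 (Set.Ioi 2)) (nhds 0) := by
      refine Filter.Tendsto.congr' ?_ tendsto_const_nhds
      filter_upwards [self_mem_nhdsWithin] with x hx
      have hx' : (2:ℝ) < x := Set.mem_Ioi.mp hx
      exact (hopen x (by rw [abs_of_pos (by linarith)]; exact hx')).symm
    exact tendsto_nhds_unique h1 h2'
  have hmtwo : deriv χ₂ (-2) = 0 := by
    have h1 : Filter.Tendsto (deriv χ₂) (nhdsWithin (-2) (Set.Iio (-2))) (nhds (deriv χ₂ (-2))) :=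
      (hc.continuousAt).continuousWithinAt
    have h2' : Filter.Tendsto (deriv χ₂) (nhdsWithin (-2) (Set.Iio (-2))) (nhds 0) := by
      refine Filter.Tendsto.congr' ?_ tendsto_const_nhds
      filter_upwards [self_mem_nhdsWithin] with x hx
      have hx' : x < (-2:ℝ) := Set.mem_Iio.mp hx
      exact (hopen x (by rw [abs_of_neg (by linarith)]; linarith)).symm
    exact tendsto_nhds_unique h1 h2'
  intro s hs
  rcases eq_or_lt_of_le hs with heq | hlt
  · rcases (abs_eq (by norm_num : (0:ℝ) ≤ 2)).mp heq.symm with h2 | h2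
    · rw [h2]; exact htwo
    · rw [h2]; exact hmtwo
  · exact hopen s hlt

/-- sign computation for the energy cutoff `ζ₂⁺` with the outgoing width
`λ(t) = δ + δ|t|^{−ν}`, from the proof of Lemma 2.7, outgoing region `t > 0`, `τ` near `+1`:
for every `R > 0` there is `T₀ ≥ 1` such that `−{τ² + q, ζ₂⁺} ≥ 0` whenever `t ≥ T₀` and
`|ξ| ≤ R`. -/
theorem stmt13 (n : ℕ) (hn : 1 ≤ n) (μ C ν δ : ℝ) (hμ : 0 < μ) (hC : 0 < C)
    (hν : 0 < ν) (hνμ : ν < μ) (hδ : 0 < δ) (hδ' : δ ≤ 1 / 16)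
    (q : ℝ → En n → ℝ → En n → ℝ)
    (hqsmooth : ContDiff ℝ (⊤ : ℕ∞) (fun v : ℝ × En n × ℝ × En n => q v.1 v.2.1 v.2.2.1 v.2.2.2))
    (hdtq : ∀ t x τ ξ, |deriv (fun s => q s x τ ξ) t| ≤ C * jap t ^ (-1 - μ) * (τ ^ 2 + ‖ξ‖ ^ 2))
    (hdτq : ∀ t x τ ξ, |deriv (fun σ => q t x σ ξ) τ| ≤ C * jap t ^ (-1 - μ) * (|τ| + ‖ξ‖))
    (χ₂ : ℝ → ℝ) (hχ₂smooth : ContDiff ℝ (⊤ : ℕ∞) χ₂)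
    (hχ₂one : ∀ s : ℝ, |s| ≤ 1 → χ₂ s = 1) (hχ₂zero : ∀ s : ℝ, 2 ≤ |s| → χ₂ s = 0)
    (hχ₂mono : ∀ s, s * deriv χ₂ s ≤ 0) :
    ∀ R > (0 : ℝ), ∃ T₀ ≥ (1 : ℝ), ∀ (t : ℝ) (x : En n) (τ : ℝ) (ξ : En n),
      T₀ ≤ t → ‖ξ‖ ≤ R →
      0 ≤ -pb n (fun t _x σ ξ' => σ ^ 2 + q t _x σ ξ')
            (fun s _ σ _ => χ₂ ((σ - 1) / lamOut δ ν s)) t x τ ξ := by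
  intro R hR
  set B : ℝ := ν * C * (2 + R) + C * (4 + R ^ 2) with hB
  set A : ℝ := B * 2 / (3 * (δ * ν)) with hA
  have h2R : (0:ℝ) < 2 + R := by linarith
  have h4R : (0:ℝ) < 4 + R ^ 2 := by positivity
  have hB0 : 0 < B := by
    rw [hB]; linarith only [mul_pos (mul_pos hν hC) h2R, mul_pos hC h4R]
  have hA0 : 0 < A := by rw [hA]; exact div_pos (by linarith) (by positivity)
  refine ⟨max 1 (A ^ (μ - ν)⁻¹), le_max_left _ _, ?_⟩
  intro t x τ ξ ht hξR
  have ht1 : 1 ≤ t := le_trans (le_max_left _ _) ht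
  have ht0 : (0:ℝ) < t := lt_of_lt_of_le zero_lt_one ht1
  -- basic powers of t
  have hE0 : (0:ℝ) < t ^ (-1 - μ) := Real.rpow_pos_of_pos ht0 _
  have hw0 : (0:ℝ) < t ^ (-ν - 1) := Real.rpow_pos_of_pos ht0 _
  have hw1 : t ^ (-ν - 1) ≤ 1 := Real.rpow_le_one_of_one_le_of_nonpos ht1 (by linarith)
  have htν : t ^ (-ν) ≤ 1 := Real.rpow_le_one_of_one_le_of_nonpos ht1 (by linarith)
  -- the width
  have hLval : lamOut δ ν t = δ + δ * t ^ (-ν) := by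
    simp [lamOut, abs_of_pos ht0]
  have hLpos : 0 < lamOut δ ν t := by
    rw [hLval]; have h := Real.rpow_pos_of_pos ht0 (-ν)
    linarith only [hδ, mul_pos hδ h]
  have hL2δ : lamOut δ ν t ≤ 2 * δ := by
    rw [hLval]; linarith only [hδ, mul_le_mul_of_nonneg_left htν hδ.le]
  set L := lamOut δ ν t with hLdef
  set s₀ := (τ - 1) / L with hs₀def
  set d := deriv χ₂ s₀ with hddef
  set dqτ := deriv (fun σ => q t x σ ξ) τ with hdqτdef
  set dqt := deriv (fun s => q s x τ ξ) t with hdqtdef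
  -- reduction of the Poisson bracket
  have hqτdiff : Differentiable ℝ (fun σ : ℝ => q t x σ ξ) := by
    have h : ContDiff ℝ (⊤ : ℕ∞) (fun σ : ℝ => q t x σ ξ) :=
      hqsmooth.comp (contDiff_const.prodMk (contDiff_const.prodMk (contDiff_id.prodMk contDiff_const)))
    exact h.differentiable (by simp)
  have hqtdiff : Differentiable ℝ (fun s : ℝ => q s x τ ξ) := by
    have h : ContDiff ℝ (⊤ : ℕ∞) (fun s : ℝ => q s x τ ξ) :=
      hqsmooth.comp (contDiff_id.prodMk (contDiff_const.prodMk (contDiff_const.prodMk contDiff_const)))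
    exact h.differentiable (by simp)
  have hχd : HasDerivAt χ₂ d s₀ := ((hχ₂smooth.differentiable (by simp)) s₀).hasDerivAt
  have ha_τ : deriv (fun σ : ℝ => σ ^ 2 + q t x σ ξ) τ = 2 * τ + dqτ := by
    have h : HasDerivAt (fun σ : ℝ => σ ^ 2 + q t x σ ξ) (2 * τ + dqτ) τ := by
      simpa [hdqτdef, Pi.add_def] using (hasDerivAt_pow 2 τ).add (hqτdiff τ).hasDerivAt
    exact h.deriv
  have ha_t : deriv (fun s : ℝ => τ ^ 2 + q s x τ ξ) t = dqt := by
    have h : HasDerivAt (fun s : ℝ => τ ^ 2 + q s x τ ξ) dqt t := by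
      simpa [hdqtdef] using ((hqtdiff t).hasDerivAt.const_add (τ ^ 2))
    exact h.deriv
  have hlam : HasDerivAt (lamOut δ ν) (δ * (-ν * t ^ (-ν - 1))) t := by
    have hp : HasDerivAt (fun s : ℝ => s ^ (-ν)) (-ν * t ^ (-ν - 1)) t :=
      Real.hasDerivAt_rpow_const (Or.inl (ne_of_gt ht0))
    have h2 : HasDerivAt (fun s : ℝ => δ + δ * s ^ (-ν)) (δ * (-ν * t ^ (-ν - 1))) t :=
      (hp.const_mul δ).const_add δ
    refine h2.congr_of_eventuallyEq ?_
    filter_upwards [eventually_gt_nhds ht0] with s hs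
    simp [lamOut, abs_of_pos hs]
  have hb_t : deriv (fun s : ℝ => χ₂ ((τ - 1) / lamOut δ ν s)) t
      = d * ((0 * L - (τ - 1) * (δ * (-ν * t ^ (-ν - 1)))) / L ^ 2) := by
    have hdiv : HasDerivAt (fun s : ℝ => (τ - 1) / lamOut δ ν s)
        ((0 * L - (τ - 1) * (δ * (-ν * t ^ (-ν - 1)))) / L ^ 2) t :=
      (hasDerivAt_const t (τ - 1)).div hlam (ne_of_gt hLpos)
    exact (hχd.comp t hdiv).deriv
  have hb_τ : deriv (fun σ : ℝ => χ₂ ((σ - 1) / L)) τ = d * (1 / L) := by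
    have hdiv : HasDerivAt (fun σ : ℝ => (σ - 1) / L) (1 / L) τ := by
      simpa using ((hasDerivAt_id τ).sub_const 1).div_const L
    exact (hχd.comp τ hdiv).deriv
  have hred : -pb n (fun t _x σ ξ' => σ ^ 2 + q t _x σ ξ')
      (fun s _ σ _ => χ₂ ((σ - 1) / lamOut δ ν s)) t x τ ξ
      = ((2 * τ + dqτ) * ((τ - 1) * (δ * (-ν * t ^ (-ν - 1)))) / L ^ 2 + dqt / L) * d := by
    simp only [pb, gradient_fun_const, inner_zero_right, inner_zero_left]
    rw [ha_τ, ha_t, hb_t, hb_τ]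
    field_simp
    ring
  rw [hred]
  clear_value L s₀ d dqτ dqt
  rcases eq_or_ne d 0 with hd | hd
  · rw [hd, mul_zero]
  -- now d ≠ 0
  have h1s : 1 ≤ |s₀| := by
    by_contra h; push_neg at h
    exact hd (hddef.trans (deriv_zero_of_lt_one χ₂ hχ₂one h))
  have h2s : |s₀| ≤ 2 := by
    by_contra h; push_neg at h
    exact hd (hddef.trans (deriv_zero_of_two_le χ₂ hχ₂smooth hχ₂zero s₀ h.le))
  have hs₀d : s₀ * d ≤ 0 := by rw [hddef]; exact hχ₂mono s₀
  set G : ℝ := -(s₀ * d) with hGdef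
  clear_value G
  have hG0 : 0 ≤ G := by rw [hGdef]; linarith
  have hdG : |d| ≤ G := by
    have h1 : |d| ≤ |s₀| * |d| := le_mul_of_one_le_left (abs_nonneg d) h1s
    have h2 : |s₀ * d| = G := by rw [abs_of_nonpos hs₀d, hGdef]
    rw [← h2, abs_mul]; exact h1
  have hτ1L : τ - 1 = s₀ * L := by rw [hs₀def]; field_simp
  -- τ is close to 1
  have hτ1 : |τ - 1| ≤ 1 / 4 := by
    rw [hτ1L, abs_mul, abs_of_pos hLpos]
    calc |s₀| * L ≤ 2 * L := mul_le_mul_of_nonneg_right h2s hLpos.le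
      _ ≤ 2 * (2 * δ) := by linarith
      _ ≤ 1 / 4 := by linarith
  obtain ⟨hτlb', hτub'⟩ := abs_le.mp hτ1
  have hτlb : (3:ℝ)/4 ≤ τ := by linarith
  have hτub : τ ≤ (5:ℝ)/4 := by linarith
  have hτabs : |τ| ≤ 2 := abs_le.mpr ⟨by linarith, by linarith⟩
  have hτsq : τ ^ 2 ≤ 4 := by
    have h0 : (0:ℝ) ≤ τ := by linarith
    calc τ ^ 2 ≤ 2 ^ 2 := pow_le_pow_left₀ h0 (by linarith) 2
      _ = 4 := by norm_num
  -- bounds on the q-derivatives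
  have hjt : t ≤ jap t := by
    rw [jap]
    exact (Real.le_sqrt ht0.le (by positivity)).mpr (by linarith only [])
  have hjap : jap t ^ (-1 - μ) ≤ t ^ (-1 - μ) :=
    Real.rpow_le_rpow_of_nonpos ht0 hjt (by linarith)
  have hdqτb : |dqτ| ≤ C * t ^ (-1 - μ) * (2 + R) := by
    calc |dqτ| ≤ C * jap t ^ (-1 - μ) * (|τ| + ‖ξ‖) := by rw [hdqτdef]; exact hdτq t x τ ξ
      _ ≤ C * t ^ (-1 - μ) * (2 + R) := by
          apply mul_le_mul (mul_le_mul_of_nonneg_left hjap hC.le)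
            (add_le_add hτabs hξR) (by positivity) (mul_nonneg hC.le hE0.le)
  have hdqtb : |dqt| ≤ C * t ^ (-1 - μ) * (4 + R ^ 2) := by
    calc |dqt| ≤ C * jap t ^ (-1 - μ) * (τ ^ 2 + ‖ξ‖ ^ 2) := by rw [hdqtdef]; exact hdtq t x τ ξ
      _ ≤ C * t ^ (-1 - μ) * (4 + R ^ 2) := by
          apply mul_le_mul (mul_le_mul_of_nonneg_left hjap hC.le)
            (add_le_add hτsq (pow_le_pow_left₀ (norm_nonneg ξ) hξR 2))
            (by positivity) (mul_nonneg hC.le hE0.le)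
  -- the key smallness inequality
  have hP : A ≤ t ^ (μ - ν) := by
    have hAt : A ^ (μ - ν)⁻¹ ≤ t := le_trans (le_max_right _ _) ht
    have h := Real.rpow_le_rpow (Real.rpow_nonneg hA0.le _) hAt (by linarith : (0:ℝ) ≤ μ - ν)
    rwa [Real.rpow_inv_rpow hA0.le (by intro h'; exact absurd h' (by linarith) : μ - ν ≠ 0)] at h
  have hEw : t ^ (μ - ν) * t ^ (-1 - μ) = t ^ (-ν - 1) := by
    rw [← Real.rpow_add ht0]; congr 1; ring
  have hBA : B = 3 / 2 * (δ * ν) * A := by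
    rw [hA]; field_simp
  have key : B * t ^ (-1 - μ) ≤ 3 / 2 * (δ * ν) * t ^ (-ν - 1) := by
    calc B * t ^ (-1 - μ) = 3 / 2 * (δ * ν) * A * t ^ (-1 - μ) := by rw [← hBA]
      _ ≤ 3 / 2 * (δ * ν) * t ^ (μ - ν) * t ^ (-1 - μ) := by
          apply mul_le_mul_of_nonneg_right
            (mul_le_mul_of_nonneg_left hP (by positivity)) hE0.le
      _ = 3 / 2 * (δ * ν) * (t ^ (μ - ν) * t ^ (-1 - μ)) := by ring
      _ = 3 / 2 * (δ * ν) * t ^ (-ν - 1) := by rw [hEw]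
  have hδw1 : δ * t ^ (-ν - 1) ≤ 1 := mul_le_one₀ (by linarith) hw0.le hw1
  -- the error terms
  have hdd : -(C * t ^ (-1 - μ) * (4 + R ^ 2) * G) ≤ dqt * d := by
    have h1 : |dqt * d| ≤ C * t ^ (-1 - μ) * (4 + R ^ 2) * G := by
      rw [abs_mul]
      exact mul_le_mul hdqtb hdG (abs_nonneg d)
        (mul_nonneg (mul_nonneg hC.le hE0.le) (by positivity))
    linarith [neg_abs_le (dqt * d)]
  have h2τ' : 3 / 2 - C * t ^ (-1 - μ) * (2 + R) ≤ 2 * τ + dqτ := by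
    have h1 := neg_abs_le dqτ
    linarith
  have key' : (ν * C * (2 + R) + C * (4 + R ^ 2)) * t ^ (-1 - μ)
      ≤ 3 / 2 * (δ * ν) * t ^ (-ν - 1) := by rw [← hB]; exact key
  have h1 : C * t ^ (-1 - μ) * (2 + R) * (δ * ν * t ^ (-ν - 1)) ≤ ν * C * (2 + R) * t ^ (-1 - μ) := by
    have hP0 : 0 ≤ ν * C * (2 + R) * t ^ (-1 - μ) :=
      mul_nonneg (mul_nonneg (mul_nonneg hν.le hC.le) h2R.le) hE0.le
    linarith only [mul_le_mul_of_nonneg_left hδw1 hP0]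
  have step2 : C * t ^ (-1 - μ) * (4 + R ^ 2)
      ≤ (3 / 2 - C * t ^ (-1 - μ) * (2 + R)) * (δ * ν * t ^ (-ν - 1)) := by
    linarith only [key', h1]
  have s1 : (3 / 2 - C * t ^ (-1 - μ) * (2 + R)) * (δ * ν * t ^ (-ν - 1)) * G
      ≤ (2 * τ + dqτ) * (δ * ν * t ^ (-ν - 1)) * G :=
    mul_le_mul_of_nonneg_right
      (mul_le_mul_of_nonneg_right h2τ'
        (mul_nonneg (mul_nonneg hδ.le hν.le) hw0.le)) hG0
  have s2 : C * t ^ (-1 - μ) * (4 + R ^ 2) * G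
      ≤ (3 / 2 - C * t ^ (-1 - μ) * (2 + R)) * (δ * ν * t ^ (-ν - 1)) * G :=
    mul_le_mul_of_nonneg_right step2 hG0
  have hN : 0 ≤ (2 * τ + dqτ) * (δ * ν * t ^ (-ν - 1)) * G + dqt * d := by
    linarith only [hdd, s1, s2]
  have hexp : ((2 * τ + dqτ) * ((τ - 1) * (δ * (-ν * t ^ (-ν - 1)))) / L ^ 2 + dqt / L) * d
      = ((2 * τ + dqτ) * (δ * ν * t ^ (-ν - 1)) * G + dqt * d) / L := by
    rw [hτ1L, hGdef]
    field_simp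
  rw [hexp]
  exact div_nonneg hN hLpos.le
end
end

section
/- Let γ > 0, 0 < ν < μ, 0 < δ ≤ 1/16, and set λ(t) = δ + δ|t|^{−ν} for |t| ≥ 1. For T ≥ 1 define ζ₁⁺(t) = χ₁((−t/T) + 1), ζ₁⁻(t) = χ₁((t/T) + 1), ζ₂^±(t,τ) = χ₂((±τ − 1)/λ(t)), ζ₃(t,x,ξ) = χ₂((q₀(x,ξ) − 1)/λ(t)), the outgoing symbol b₀(t,x,τ,ξ) = |t|^{−γ} (ζ₁⁺(t)ζ₂⁺(t,τ) + ζ₁⁻(t)ζ₂⁻(t,τ)) ζ₃(t,x,ξ), and the compensating term f̃(t,x,τ,ξ) = ({τ² + q, ζ₁⁺}ζ₂⁺ + {τ² + q, ζ₁⁻}ζ₂⁻)(t,x,τ,ξ) |t|^{−γ} ζ₃(t,x,ξ). Then there exist c₀′ > 0, C′ > 0 and T₀ ≥ 1 such that for every T ≥ T₀: (i) f̃(t,x,τ,ξ) = 0 unless T ≤ |t| ≤ 2T; (ii) |f̃(t,x,τ,ξ)| ≤ C′ for all (t,x,τ,ξ) with |t| ≥ 1; and (iii) −{τ² + q, b₀}(t,x,τ,ξ)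 ≥ c₀′ |t|^{−1} b₀(t,x,τ,ξ) − f̃(t,x,τ,ξ) for all (t,x,τ,ξ) with |t| ≥ 1. -/
open Real
open scoped RealInnerProductSpace

noncomputable section

/-- The full symbol `τ² + q`. -/
def aKG (n : ℕ) (q : ℝ → En n → ℝ → En n → ℝ) : ℝ → En n → ℝ → En n → ℝ :=
  fun s y σ η => σ ^ 2 + q s y σ η

/-- The time cutoff `ζ₁⁺(t) = χ₁((−t/T)+1)`, as a function on phase space. -/
def zeta1p (n : ℕ) (χ₁ : ℝ → ℝ) (T : ℝ) : ℝ → En n → ℝ → En n → ℝ :=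
  fun s _ _ _ => χ₁ (-s / T + 1)

/-- The time cutoff `ζ₁⁻(t) = χ₁((t/T)+1)`, as a function on phase space. -/
def zeta1m (n : ℕ) (χ₁ : ℝ → ℝ) (T : ℝ) : ℝ → En n → ℝ → En n → ℝ :=
  fun s _ _ _ => χ₁ (s / T + 1)

/-- The outgoing escape symbol `b₀ = |t|^{−γ}(ζ₁⁺ζ₂⁺ + ζ₁⁻ζ₂⁻)ζ₃`. -/
def b0Out (n : ℕ) (γ ν δ : ℝ) (q₀ : En n → En n → ℝ) (χ₁ χ₂ : ℝ → ℝ) (T : ℝ) :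
    ℝ → En n → ℝ → En n → ℝ :=
  fun s y σ η => |s| ^ (-γ) *
    ((χ₁ (-s / T + 1) * χ₂ ((σ - 1) / lamOut δ ν s)
      + χ₁ (s / T + 1) * χ₂ ((-σ - 1) / lamOut δ ν s))
      * χ₂ ((q₀ y η - 1) / lamOut δ ν s))

/-- The compensating term `f̃ = ({τ²+q, ζ₁⁺}ζ₂⁺ + {τ²+q, ζ₁⁻}ζ₂⁻)|t|^{−γ}ζ₃`. -/
def fTilde (n : ℕ) (γ ν δ : ℝ) (q₀ : En n → En n → ℝ) (q : ℝ → En n → ℝ → En n → ℝ)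
    (χ₁ χ₂ : ℝ → ℝ) (T : ℝ) (t : ℝ) (x : En n) (τ : ℝ) (ξ : En n) : ℝ :=
  (pb n (aKG n q) (zeta1p n χ₁ T) t x τ ξ * χ₂ ((τ - 1) / lamOut δ ν t)
    + pb n (aKG n q) (zeta1m n χ₁ T) t x τ ξ * χ₂ ((-τ - 1) / lamOut δ ν t))
    * |t| ^ (-γ) * χ₂ ((q₀ x ξ - 1) / lamOut δ ν t)


open Filter Set

-- ### auxiliary general lemmas

lemma hasGradientAt_comp_deriv {F : Type*} [NormedAddCommGroup F] [InnerProductSpace ℝ F]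
    [CompleteSpace F] {g : F → ℝ} {v x : F} (hg : HasGradientAt g v x)
    {f : ℝ → ℝ} {f' : ℝ} (hf : HasDerivAt f f' (g x)) :
    HasGradientAt (fun y => f (g y)) (f' • v) x := by
  have h := hf.hasFDerivAt.comp x hg.hasFDerivAt
  rw [hasGradientAt_iff_hasFDerivAt]
  refine h.congr_fderiv ?_
  ext y
  simp [ContinuousLinearMap.smulRight_apply, real_inner_smul_left, mul_comm]

lemma gradient_const_add' {F : Type*} [NormedAddCommGroup F] [InnerProductSpace ℝ F]
    [CompleteSpace F] (g : F → ℝ) (c : ℝ) (x : F) :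
    gradient (fun y => c + g y) x = gradient g x := by
  unfold gradient
  rw [fderiv_const_add]

lemma deriv_zero_of_const_on_open {χ : ℝ → ℝ} (hc : Continuous (deriv χ)) {U : Set ℝ}
    (hU : IsOpen U) (k : ℝ) (h : ∀ s ∈ U, χ s = k) {x : ℝ} (hx : x ∈ closure U) :
    deriv χ x = 0 := by
  have h0 : ∀ s ∈ U, deriv χ s = 0 := fun s hs => by
    have he : χ =ᶠ[nhds s] fun _ => k := Filter.eventuallyEq_of_mem (hU.mem_nhds hs) h
    rw [he.deriv_eq]; exact deriv_const s k
  exact closure_minimal h0 (isClosed_eq hc continuous_const) hx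

lemma bounded_of_zero_outside {χ : ℝ → ℝ} (hc : Continuous χ) (a b : ℝ)
    (h : ∀ s, s ∉ Set.Icc a b → χ s = 0) : ∃ M > 0, ∀ s, |χ s| ≤ M := by
  obtain ⟨M, hM⟩ := (isCompact_Icc (a := a) (b := b)).exists_bound_of_continuousOn
    hc.continuousOn
  refine ⟨max M 1, lt_of_lt_of_le one_pos (le_max_right _ _), fun s => ?_⟩
  by_cases hs : s ∈ Set.Icc a b
  · exact le_trans (hM s hs) (le_max_left _ _)
  · rw [h s hs]; simp

lemma one_le_jap (t : ℝ) : 1 ≤ jap t := by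
  rw [jap]
  nlinarith [Real.sq_sqrt (show (0:ℝ) ≤ 1 + t ^ 2 by positivity),
    Real.sqrt_nonneg (1 + t ^ 2)]

lemma le_jap (t : ℝ) : |t| ≤ jap t := by
  rw [jap, ← Real.sqrt_sq_eq_abs]
  exact Real.sqrt_le_sqrt (by nlinarith)

lemma jap_neg (t : ℝ) : jap (-t) = jap t := by rw [jap, jap, neg_pow]; norm_num

lemma pb_reflect (n : ℕ) (a b : ℝ → En n → ℝ → En n → ℝ) (t : ℝ) (x : En n) (τ : ℝ) (ξ : En n) :
    pb n (fun s y σ η => a (-s) y (-σ) η) (fun s y σ η => b (-s) y (-σ) η) t x τ ξ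
      = pb n a b (-t) x (-τ) ξ := by
  simp only [pb]
  have e1 : deriv (fun σ => a (-t) x (-σ) ξ) τ = -deriv (fun σ => a (-t) x σ ξ) (-τ) :=
    deriv_comp_neg (fun σ => a (-t) x σ ξ) τ
  have e2 : deriv (fun s => b (-s) x (-τ) ξ) t = -deriv (fun s => b s x (-τ) ξ) (-t) :=
    deriv_comp_neg (fun s => b s x (-τ) ξ) t
  have e3 : deriv (fun s => a (-s) x (-τ) ξ) t = -deriv (fun s => a s x (-τ) ξ) (-t) :=
    deriv_comp_neg (fun s => a s x (-τ) ξ) t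
  have e4 : deriv (fun σ => b (-t) x (-σ) ξ) τ = -deriv (fun σ => b (-t) x σ ξ) (-τ) :=
    deriv_comp_neg (fun σ => b (-t) x σ ξ) τ
  rw [e1, e2, e3, e4]
  ring

-- ### explicit constants

def Bc (c₀ : ℝ) : ℝ := Real.sqrt (2 / c₀)
def Kc (c₀ : ℝ) : ℝ := 2 + Bc c₀
def K2c (c₀ : ℝ) : ℝ := 4 + Bc c₀ * Bc c₀
def Cbc (C C₀ c₀ : ℝ) : ℝ :=
  C * (K2c c₀ + C₀ * (K2c c₀ * Bc c₀ + Kc c₀ * Bc c₀ * Bc c₀)) + 1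
def T0c (C C₀ c₀ μ ν δ : ℝ) : ℝ :=
  max (max 1 (2 * C * Kc c₀)) ((Cbc C C₀ c₀ / (δ * ν)) ^ ((1:ℝ) / (μ - ν)))

-- key lemma, to be appended after aux
lemma b0Out_reflect (n : ℕ) (γ ν δ : ℝ) (q₀ : En n → En n → ℝ) (χ₁ χ₂ : ℝ → ℝ) (T : ℝ)
    (t : ℝ) (x : En n) (τ : ℝ) (ξ : En n) :
    b0Out n γ ν δ q₀ χ₁ χ₂ T (-t) x (-τ) ξ = b0Out n γ ν δ q₀ χ₁ χ₂ T t x τ ξ := by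
  simp only [b0Out, lamOut, abs_neg, neg_neg]
  ring

set_option maxHeartbeats 1600000 in
lemma key (n : ℕ) (μ C C₀ c₀ γ ν δ : ℝ) (hμ : 0 < μ) (hC : 0 < C) (hC₀ : 0 < C₀)
    (hc₀ : 0 < c₀) (hγ : 0 < γ) (hν : 0 < ν) (hνμ : ν < μ) (hδ : 0 < δ) (hδ' : δ ≤ 1 / 16)
    (q₀ : En n → En n → ℝ)
    (hq₀smooth : ContDiff ℝ (⊤ : ℕ∞) (fun v : En n × En n => q₀ v.1 v.2))
    (hq₀ell : ∀ x ξ, c₀ * ‖ξ‖ ^ 2 ≤ q₀ x ξ)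
    (hdxq₀ : ∀ x ξ, ‖gradient (fun y => q₀ y ξ) x‖ ≤ C₀ * ‖ξ‖ ^ 2)
    (hdξq₀ : ∀ x ξ, ‖gradient (fun η => q₀ x η) ξ‖ ≤ C₀ * ‖ξ‖)
    (q : ℝ → En n → ℝ → En n → ℝ)
    (hqsmooth : ContDiff ℝ (⊤ : ℕ∞) (fun v : ℝ × En n × ℝ × En n => q v.1 v.2.1 v.2.2.1 v.2.2.2))
    (hdtxq : ∀ t x τ ξ, |deriv (fun s => q s x τ ξ) t| + ‖gradient (fun y => q t y τ ξ) x‖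
      ≤ C * jap t ^ (-1 - μ) * (τ ^ 2 + ‖ξ‖ ^ 2))
    (hdτξq : ∀ t x τ ξ, |deriv (fun σ => q t x σ ξ) τ| + ‖gradient (fun η => q t x τ η) ξ‖
      ≤ C * jap t ^ (-1 - μ) * (|τ| + ‖ξ‖))
    (χ₁ : ℝ → ℝ) (hχ₁smooth : ContDiff ℝ (⊤ : ℕ∞) χ₁)
    (hχ₁zero : ∀ s ≥ (0 : ℝ), χ₁ s = 0) (hχ₁nonneg : ∀ s, 0 ≤ χ₁ s)
    (χ₂ : ℝ → ℝ) (hχ₂smooth : ContDiff ℝ (⊤ : ℕ∞) χ₂)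
    (hχ₂one : ∀ s : ℝ, |s| ≤ 1 → χ₂ s = 1) (hχ₂zero : ∀ s : ℝ, 2 ≤ |s| → χ₂ s = 0)
    (hχ₂mono : ∀ s, s * deriv χ₂ s ≤ 0) (hχ₂nonneg : ∀ s, 0 ≤ χ₂ s)
    (T : ℝ) (hT : T0c C C₀ c₀ μ ν δ ≤ T)
    (t : ℝ) (x : En n) (τ : ℝ) (ξ : En n) (ht : 1 ≤ t) :
    γ * t⁻¹ * b0Out n γ ν δ q₀ χ₁ χ₂ T t x τ ξ - fTilde n γ ν δ q₀ q χ₁ χ₂ T t x τ ξ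
      ≤ -pb n (aKG n q) (b0Out n γ ν δ q₀ χ₁ χ₂ T) t x τ ξ := by
  have ht0 : (0:ℝ) < t := lt_of_lt_of_le one_pos ht
  have hT1 : (1:ℝ) ≤ T :=
    le_trans (le_trans (le_max_left 1 (2 * C * Kc c₀)) (le_max_left _ _)) hT
  have hTpos : (0:ℝ) < T := lt_of_lt_of_le one_pos hT1
  have habs : |t| = t := abs_of_pos ht0
  -- the width L
  set L : ℝ := δ + δ * t ^ (-ν) with hLdef
  have hlam2 : lamOut δ ν t = L := by rw [lamOut, habs, hLdef]
  have htν1 : t ^ (-ν) ≤ 1 := Real.rpow_le_one_of_one_le_of_nonpos ht (by linarith)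
  have htν0 : (0:ℝ) ≤ t ^ (-ν) := Real.rpow_nonneg ht0.le _
  have hL0 : 0 < L := by rw [hLdef]; nlinarith only [hδ, htν0]
  have hL2δ : L ≤ 2 * δ := by rw [hLdef]; nlinarith only [hδ, htν1, htν0]
  have hLδ : δ ≤ L := by rw [hLdef]; nlinarith only [hδ, htν0]
  have hL8 : L ≤ 1/8 := by linarith
  -- atoms
  set w : ℝ := t ^ (-γ) with hwdef
  have hw0 : 0 < w := Real.rpow_pos_of_pos ht0 _
  set Z1 : ℝ := χ₁ (-t / T + 1) with hZ1def
  set Z1' : ℝ := deriv χ₁ (-t / T + 1) with hZ1'def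
  set u : ℝ := (τ - 1) / L with hudef
  set v : ℝ := (q₀ x ξ - 1) / L with hvdef
  set X : ℝ := χ₂ u with hXdef
  set X' : ℝ := deriv χ₂ u with hX'def
  set Y : ℝ := χ₂ v with hYdef
  set Y' : ℝ := deriv χ₂ v with hY'def
  set N : ℝ := δ * ν * t ^ (-ν - 1) with hNdef
  have hN0 : 0 < N := by rw [hNdef]; positivity
  set qτ' : ℝ := deriv (fun σ => q t x σ ξ) τ with hqτ'def
  set qt' : ℝ := deriv (fun s => q s x τ ξ) t with hqt'def
  set P : ℝ := 2 * τ + qτ' with hPdef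
  set Gx : En n := gradient (fun y => q₀ y ξ) x with hGxdef
  set Gξ : En n := gradient (fun η => q₀ x η) ξ with hGξdef
  set Gqx : En n := gradient (fun y => q t y τ ξ) x with hGqxdef
  set Gqξ : En n := gradient (fun η => q t x τ η) ξ with hGqξdef
  set Ix : ℝ := ⟪Gqξ, Gx⟫ with hIxdef
  set Iξ : ℝ := ⟪Gqx, Gξ⟫ with hIξdef
  set du : ℝ := (τ - 1) * N / L ^ 2 with hdudef
  set dv : ℝ := (q₀ x ξ - 1) * N / L ^ 2 with hdvdef
  set B : ℝ := Bc c₀ with hBdef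
  have hB0 : 0 < B := by rw [hBdef, Bc]; positivity
  have hz1m0 : χ₁ (t / T + 1) = 0 := hχ₁zero _ (by positivity)
  -- differentiability of slices
  have hχ₁d : Differentiable ℝ χ₁ := hχ₁smooth.differentiable (by simp)
  have hχ₂d : Differentiable ℝ χ₂ := hχ₂smooth.differentiable (by simp)
  have hq₀dx : DifferentiableAt ℝ (fun y => q₀ y ξ) x := by
    have h := (hq₀smooth.differentiable (by simp)).comp
      (Differentiable.prodMk differentiable_id (differentiable_const ξ))
    simpa [Function.comp_def] using h x
  have hq₀dξ : DifferentiableAt ℝ (fun η => q₀ x η) ξ := by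
    have h := (hq₀smooth.differentiable (by simp)).comp
      (Differentiable.prodMk (differentiable_const x) differentiable_id)
    simpa [Function.comp_def] using h ξ
  have hqdiff := hqsmooth.differentiable (by simp)
  have hqdτ : DifferentiableAt ℝ (fun σ => q t x σ ξ) τ := by
    have h := hqdiff.comp (Differentiable.prodMk (differentiable_const t)
      (Differentiable.prodMk (differentiable_const x)
        (Differentiable.prodMk differentiable_id (differentiable_const ξ))))
    simpa [Function.comp_def] using h τ
  have hqdt : DifferentiableAt ℝ (fun s => q s x τ ξ) t := by
    have h := hqdiff.comp (Differentiable.prodMk differentiable_id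
      (differentiable_const (x, τ, ξ)))
    simpa [Function.comp_def] using h t
  -- vanishing of cutoff derivatives
  have hχ₂dc : Continuous (deriv χ₂) := hχ₂smooth.continuous_deriv (by simp)
  have hχ₁dc : Continuous (deriv χ₁) := hχ₁smooth.continuous_deriv (by simp)
  have hder_small : ∀ s : ℝ, |s| ≤ 1 → deriv χ₂ s = 0 := by
    intro s hs
    refine deriv_zero_of_const_on_open (U := Set.Ioo (-1:ℝ) 1) hχ₂dc isOpen_Ioo (1:ℝ)
      (fun r hr => hχ₂one r (abs_le.2 ⟨hr.1.le, hr.2.le⟩)) ?_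
    rw [closure_Ioo (by norm_num : (-1:ℝ) ≠ 1)]
    exact abs_le.1 hs
  have hder_big : ∀ s : ℝ, 2 ≤ |s| → deriv χ₂ s = 0 := by
    intro s hs
    rcases le_or_gt 2 s with h | h
    · refine deriv_zero_of_const_on_open (U := Set.Ioi (2:ℝ)) hχ₂dc isOpen_Ioi (0:ℝ)
        (fun r hr => hχ₂zero r ?_) ?_
      · have hr' : (2:ℝ) < r := mem_Ioi.1 hr
        rw [abs_of_pos (by linarith)]; linarith
      · rw [closure_Ioi]; exact h
    · have hs' : s ≤ -2 := by
        rcases abs_cases s with ⟨h1, _⟩ | ⟨h1, _⟩ <;> linarith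
      refine deriv_zero_of_const_on_open (U := Set.Iio (-2:ℝ)) hχ₂dc isOpen_Iio (0:ℝ)
        (fun r hr => hχ₂zero r ?_) ?_
      · have hr' : r < -2 := mem_Iio.1 hr
        rw [abs_of_neg (by linarith)]; linarith
      · rw [closure_Iio]; exact hs'
  have hχ₁der0 : ∀ s : ℝ, 0 ≤ s → deriv χ₁ s = 0 := by
    intro s hs
    refine deriv_zero_of_const_on_open (U := Set.Ioi (0:ℝ)) hχ₁dc isOpen_Ioi (0:ℝ)
      (fun r hr => hχ₁zero r (le_of_lt (mem_Ioi.1 hr))) ?_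
    rw [closure_Ioi]; exact hs
  -- support facts
  have hXsupp : X ≠ 0 → |u| ≤ 2 := by
    intro h; by_contra hc; push_neg at hc; exact h (hχ₂zero u hc.le)
  have hX'supp : X' ≠ 0 → 1 ≤ |u| ∧ |u| ≤ 2 := by
    intro h
    constructor
    · by_contra hc; push_neg at hc; exact h (hder_small u hc.le)
    · by_contra hc; push_neg at hc; exact h (hder_big u hc.le)
  have hYsupp : Y ≠ 0 → |v| ≤ 2 := by
    intro h; by_contra hc; push_neg at hc; exact h (hχ₂zero v hc.le)
  have hY'supp : Y' ≠ 0 → 1 ≤ |v| ∧ |v| ≤ 2 := by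
    intro h
    constructor
    · by_contra hc; push_neg at hc; exact h (hder_small v hc.le)
    · by_contra hc; push_neg at hc; exact h (hder_big v hc.le)
  have hZ1supp : Z1 ≠ 0 → T ≤ t := by
    intro h
    by_contra hc; push_neg at hc
    refine h (hχ₁zero _ ?_)
    have h2 : t / T ≤ 1 := (div_le_one hTpos).2 hc.le
    rw [neg_div]; linarith
  -- bounds coming from the support
  have habs_u : |τ - 1| = |u| * L := by
    rw [hudef, abs_div, abs_of_pos hL0, div_mul_cancel₀ _ (ne_of_gt hL0)]
  have habs_v : |q₀ x ξ - 1| = |v| * L := by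
    rw [hvdef, abs_div, abs_of_pos hL0, div_mul_cancel₀ _ (ne_of_gt hL0)]
  have huτ : |u| ≤ 2 → |τ - 1| ≤ 2 * L ∧ 3/4 ≤ τ ∧ τ ≤ 5/4 ∧ |τ| ≤ 2 := by
    intro h
    have h2 : |τ - 1| ≤ 2 * L := by rw [habs_u]; nlinarith only [h, hL0, abs_nonneg u]
    have h3 := abs_le.1 h2
    exact ⟨h2, by linarith [h3.1], by linarith [h3.2],
      abs_le.2 ⟨by linarith [h3.1], by linarith [h3.2]⟩⟩
  have huL : 1 ≤ |u| → L ≤ |τ - 1| := by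
    intro h; rw [habs_u]; nlinarith only [h, hL0]
  have hvL : 1 ≤ |v| → L ≤ |q₀ x ξ - 1| := by
    intro h; rw [habs_v]; nlinarith only [h, hL0]
  have hvξ : |v| ≤ 2 → ‖ξ‖ ≤ B ∧ ‖ξ‖ ^ 2 ≤ B * B := by
    intro h
    have h2 : q₀ x ξ ≤ 2 := by
      have h2' : |q₀ x ξ - 1| ≤ 2 * L := by rw [habs_v]; nlinarith only [h, hL0, abs_nonneg v]
      have := (abs_le.1 h2').2
      linarith
    have h3 : ‖ξ‖ ^ 2 ≤ 2 / c₀ := by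
      have h3' := hq₀ell x ξ
      rw [le_div_iff₀ hc₀]
      nlinarith only [h3', h2]
    have h4 : ‖ξ‖ ≤ B := by
      rw [hBdef, Bc]
      calc ‖ξ‖ = Real.sqrt (‖ξ‖ ^ 2) := (Real.sqrt_sq (norm_nonneg ξ)).symm
        _ ≤ Real.sqrt (2 / c₀) := Real.sqrt_le_sqrt h3
    exact ⟨h4, by nlinarith only [h4, norm_nonneg ξ, hB0]⟩
  -- decay estimates
  have hBc0 : (0:ℝ) ≤ Bc c₀ := Real.sqrt_nonneg _
  have hK2c0 : (0:ℝ) ≤ K2c c₀ := by rw [K2c]; nlinarith only [hBc0]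
  have hKc0 : (0:ℝ) ≤ Kc c₀ := by rw [Kc]; linarith only [hBc0]
  have hprod1 : (0:ℝ) ≤ C₀ * (K2c c₀ * Bc c₀ + Kc c₀ * Bc c₀ * Bc c₀) :=
    mul_nonneg hC₀.le (by positivity)
  have hjap : ∀ e : ℝ, e ≤ 0 → jap t ^ e ≤ t ^ e := fun e he =>
    Real.rpow_le_rpow_of_nonpos ht0 (le_trans (le_of_eq habs.symm) (le_jap t)) he
  have hjap0 : (0:ℝ) ≤ jap t ^ (-1 - μ) :=
    Real.rpow_nonneg (by linarith [one_le_jap t]) _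
  have hsplit : t ^ (-1 - μ) = t ^ (-ν - 1) * t ^ (ν - μ) := by
    rw [← Real.rpow_add ht0]; congr 1; ring
  have hCb0 : 0 < Cbc C C₀ c₀ := by
    rw [Cbc]
    nlinarith only [mul_nonneg hC.le (by linarith only [hK2c0, hprod1] :
      (0:ℝ) ≤ K2c c₀ + C₀ * (K2c c₀ * Bc c₀ + Kc c₀ * Bc c₀ * Bc c₀))]
  have hK0 : 0 < Kc c₀ := by
    rw [Kc, ← hBdef]; linarith only [hB0]
  have hdecay : T ≤ t → Cbc C C₀ c₀ * jap t ^ (-1 - μ) ≤ N := by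
    intro hTt
    have hA0 : 0 < Cbc C C₀ c₀ / (δ * ν) := by positivity
    have hR : (Cbc C C₀ c₀ / (δ * ν)) ^ ((1:ℝ) / (μ - ν)) ≤ t := by
      calc (Cbc C C₀ c₀ / (δ * ν)) ^ ((1:ℝ) / (μ - ν)) ≤ T0c C C₀ c₀ μ ν δ :=
            le_max_right _ _
        _ ≤ T := hT
        _ ≤ t := hTt
    have h4 : Cbc C C₀ c₀ / (δ * ν) ≤ t ^ (μ - ν) := by
      have h5 := Real.rpow_le_rpow (Real.rpow_nonneg hA0.le _) hR
        (le_of_lt (sub_pos.2 hνμ))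
      rwa [← Real.rpow_mul hA0.le, one_div_mul_cancel (ne_of_gt (sub_pos.2 hνμ)),
        Real.rpow_one] at h5
    have h6 : t ^ (ν - μ) ≤ δ * ν / Cbc C C₀ c₀ := by
      have h7 : t ^ (ν - μ) = (t ^ (μ - ν))⁻¹ := by
        rw [← Real.rpow_neg ht0.le]; congr 1; ring
      rw [h7, show δ * ν / Cbc C C₀ c₀ = (Cbc C C₀ c₀ / (δ * ν))⁻¹ from (inv_div _ _).symm]
      exact inv_anti₀ hA0 h4
    have h8 : jap t ^ (-1 - μ) ≤ t ^ (-ν - 1) * (δ * ν / Cbc C C₀ c₀) := by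
      calc jap t ^ (-1 - μ) ≤ t ^ (-1 - μ) := hjap _ (by linarith)
        _ = t ^ (-ν - 1) * t ^ (ν - μ) := hsplit
        _ ≤ t ^ (-ν - 1) * (δ * ν / Cbc C C₀ c₀) :=
            mul_le_mul_of_nonneg_left h6 (Real.rpow_nonneg ht0.le _)
    calc Cbc C C₀ c₀ * jap t ^ (-1 - μ)
        ≤ Cbc C C₀ c₀ * (t ^ (-ν - 1) * (δ * ν / Cbc C C₀ c₀)) :=
          mul_le_mul_of_nonneg_left h8 hCb0.le
      _ = N := by rw [hNdef]; field_simp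
  have hjapT : T ≤ t → jap t ^ (-1 - μ) ≤ T⁻¹ := by
    intro hTt
    calc jap t ^ (-1 - μ) ≤ t ^ (-1 - μ) := hjap _ (by linarith)
      _ ≤ t ^ (-1 : ℝ) := Real.rpow_le_rpow_of_exponent_le ht (by linarith)
      _ = t⁻¹ := Real.rpow_neg_one t
      _ ≤ T⁻¹ := inv_anti₀ hTpos hTt
  have hqτ'small : |τ| ≤ 2 → ‖ξ‖ ≤ B → T ≤ t → |qτ'| ≤ 1 / 2 := by
    intro h1 h2 h3
    have h4 := hdτξq t x τ ξ
    rw [← hqτ'def, ← hGqξdef] at h4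
    have h5 : |qτ'| ≤ C * jap t ^ (-1 - μ) * (|τ| + ‖ξ‖) := by
      linarith only [h4, norm_nonneg Gqξ]
    have h6 : jap t ^ (-1 - μ) ≤ T⁻¹ := hjapT h3
    have h7 : 2 * C * Kc c₀ ≤ T :=
      le_trans (le_trans (le_max_right _ _) (le_max_left _ _)) hT
    have h8 : |τ| + ‖ξ‖ ≤ Kc c₀ := by rw [Kc, ← hBdef]; linarith
    have h9 : C * (jap t ^ (-1 - μ)) * (|τ| + ‖ξ‖) ≤ C * T⁻¹ * Kc c₀ := by
      have p2 : 0 ≤ |τ| + ‖ξ‖ := by positivity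
      calc C * (jap t ^ (-1 - μ)) * (|τ| + ‖ξ‖)
          ≤ C * T⁻¹ * (|τ| + ‖ξ‖) :=
            mul_le_mul_of_nonneg_right (mul_le_mul_of_nonneg_left h6 hC.le) p2
        _ ≤ C * T⁻¹ * Kc c₀ := mul_le_mul_of_nonneg_left h8
            (mul_nonneg hC.le (inv_nonneg.2 hTpos.le))
    have h10 : C * T⁻¹ * Kc c₀ ≤ 1 / 2 := by
      rw [show C * T⁻¹ * Kc c₀ = C * Kc c₀ / T by field_simp, div_le_iff₀ hTpos]
      linarith only [h7]
    linarith
  have hP1 : Z1 ≠ 0 → |u| ≤ 2 → |v| ≤ 2 → 1 ≤ P := by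
    intro hZ hu hv
    obtain ⟨_, hτ1, _, hτ2⟩ := huτ hu
    have hsm := hqτ'small hτ2 (hvξ hv).1 (hZ1supp hZ)
    rw [hPdef]
    have habs2 := abs_le.1 hsm
    linarith only [habs2.1, hτ1]
  have hqt'N : Z1 ≠ 0 → |u| ≤ 2 → |v| ≤ 2 → |qt'| ≤ N := by
    intro hZ hu hv
    have h4 := hdtxq t x τ ξ
    rw [← hqt'def, ← hGqxdef] at h4
    have hτ2 := (huτ hu).2.2.2
    have hξ2 := (hvξ hv).2
    have h5 : |qt'| ≤ C * jap t ^ (-1 - μ) * (τ ^ 2 + ‖ξ‖ ^ 2) := by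
      linarith only [h4, norm_nonneg Gqx]
    have h6 : τ ^ 2 + ‖ξ‖ ^ 2 ≤ K2c c₀ := by
      rw [K2c, ← hBdef]
      have h6' : τ ^ 2 ≤ 4 := by nlinarith only [sq_abs τ, abs_nonneg τ, hτ2]
      linarith only [h6', hξ2]
    have h7 : C * K2c c₀ ≤ Cbc C C₀ c₀ := by
      rw [Cbc]
      nlinarith only [mul_nonneg hC.le hprod1]
    have h8 : C * jap t ^ (-1 - μ) * (τ ^ 2 + ‖ξ‖ ^ 2) ≤ Cbc C C₀ c₀ * jap t ^ (-1 - μ) := by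
      calc C * jap t ^ (-1 - μ) * (τ ^ 2 + ‖ξ‖ ^ 2)
          ≤ C * jap t ^ (-1 - μ) * K2c c₀ :=
            mul_le_mul_of_nonneg_left h6 (mul_nonneg hC.le hjap0)
        _ = C * K2c c₀ * jap t ^ (-1 - μ) := by ring
        _ ≤ Cbc C C₀ c₀ * jap t ^ (-1 - μ) := mul_le_mul_of_nonneg_right h7 hjap0
    exact le_trans h5 (le_trans h8 (hdecay (hZ1supp hZ)))
  have hIbound : Z1 ≠ 0 → |u| ≤ 2 → |v| ≤ 2 → |Ix| + |Iξ| ≤ N := by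
    intro hZ hu hv
    have hτ2 := (huτ hu).2.2.2
    obtain ⟨hξB, hξB2⟩ := hvξ hv
    have h4 := hdτξq t x τ ξ
    rw [← hqτ'def, ← hGqξdef] at h4
    have h5 := hdtxq t x τ ξ
    rw [← hqt'def, ← hGqxdef] at h5
    have hCj : (0:ℝ) ≤ C * jap t ^ (-1 - μ) := mul_nonneg hC.le hjap0
    have hGqξn : ‖Gqξ‖ ≤ C * jap t ^ (-1 - μ) * Kc c₀ := by
      have h8 : |τ| + ‖ξ‖ ≤ Kc c₀ := by rw [Kc, ← hBdef]; linarith only [hτ2, hξB]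
      have h9 : C * jap t ^ (-1 - μ) * (|τ| + ‖ξ‖) ≤ C * jap t ^ (-1 - μ) * Kc c₀ :=
        mul_le_mul_of_nonneg_left h8 hCj
      linarith only [h4, h9, abs_nonneg qτ']
    have hGqxn : ‖Gqx‖ ≤ C * jap t ^ (-1 - μ) * K2c c₀ := by
      have h8 : τ ^ 2 + ‖ξ‖ ^ 2 ≤ K2c c₀ := by
        rw [K2c, ← hBdef]
        have h6' : τ ^ 2 ≤ 4 := by nlinarith only [sq_abs τ, abs_nonneg τ, hτ2]
        linarith only [h6', hξB2]
      have h9 : C * jap t ^ (-1 - μ) * (τ ^ 2 + ‖ξ‖ ^ 2) ≤ C * jap t ^ (-1 - μ) * K2c c₀ :=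
        mul_le_mul_of_nonneg_left h8 hCj
      linarith only [h5, h9, abs_nonneg qt']
    have hGxn : ‖Gx‖ ≤ C₀ * (B * B) := by
      rw [hGxdef]
      refine le_trans (hdxq₀ x ξ) (mul_le_mul_of_nonneg_left ?_ hC₀.le)
      nlinarith only [hξB2]
    have hGξn : ‖Gξ‖ ≤ C₀ * B := by
      rw [hGξdef]
      exact le_trans (hdξq₀ x ξ) (mul_le_mul_of_nonneg_left hξB hC₀.le)
    have hIx2 : |Ix| ≤ (C * jap t ^ (-1 - μ) * Kc c₀) * (C₀ * (B * B)) := by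
      rw [hIxdef]
      refine le_trans (abs_real_inner_le_norm _ _) ?_
      exact mul_le_mul hGqξn hGxn (norm_nonneg _) (mul_nonneg hCj hKc0)
    have hIξ2 : |Iξ| ≤ (C * jap t ^ (-1 - μ) * K2c c₀) * (C₀ * B) := by
      rw [hIξdef]
      refine le_trans (abs_real_inner_le_norm _ _) ?_
      exact mul_le_mul hGqxn hGξn (norm_nonneg _) (mul_nonneg hCj hK2c0)
    have hsum : (C * jap t ^ (-1 - μ) * Kc c₀) * (C₀ * (B * B))
        + (C * jap t ^ (-1 - μ) * K2c c₀) * (C₀ * B) ≤ Cbc C C₀ c₀ * jap t ^ (-1 - μ) := by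
      have hrw : Cbc C C₀ c₀ * jap t ^ (-1 - μ)
          - ((C * jap t ^ (-1 - μ) * Kc c₀) * (C₀ * (B * B))
            + (C * jap t ^ (-1 - μ) * K2c c₀) * (C₀ * B))
          = C * K2c c₀ * jap t ^ (-1 - μ) + jap t ^ (-1 - μ) := by
        rw [Cbc, hBdef]; ring
      nlinarith only [hrw, mul_nonneg (mul_nonneg hC.le hK2c0) hjap0, hjap0]
    exact le_trans (by linarith only [hIx2, hIξ2]) (le_trans hsum (hdecay (hZ1supp hZ)))
  -- the t-derivative of b₀
  have hevent : (fun s => b0Out n γ ν δ q₀ χ₁ χ₂ T s x τ ξ) =ᶠ[nhds t]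
      (fun s => s ^ (-γ) * ((χ₁ (-s / T + 1) * χ₂ ((τ - 1) / (δ + δ * s ^ (-ν)))) *
        χ₂ ((q₀ x ξ - 1) / (δ + δ * s ^ (-ν))))) := by
    filter_upwards [Ioi_mem_nhds ht0] with s hs
    have habs2 : |s| = s := abs_of_pos hs
    have hzz : χ₁ (s / T + 1) = 0 := by
      refine hχ₁zero _ ?_
      have := div_nonneg hs.le hTpos.le
      linarith
    simp only [b0Out, lamOut, habs2, hzz, zero_mul, add_zero]
  have hrpw : HasDerivAt (fun s : ℝ => s ^ (-γ)) (-γ * t ^ (-γ - 1)) t :=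
    Real.hasDerivAt_rpow_const (Or.inl ht0.ne')
  have hrpwv : HasDerivAt (fun s : ℝ => s ^ (-ν)) (-ν * t ^ (-ν - 1)) t :=
    Real.hasDerivAt_rpow_const (Or.inl ht0.ne')
  have hLd : HasDerivAt (fun s : ℝ => δ + δ * s ^ (-ν)) (δ * (-ν * t ^ (-ν - 1))) t :=
    (hrpwv.const_mul δ).const_add δ
  have hLne : δ + δ * t ^ (-ν) ≠ 0 := by rw [← hLdef]; exact hL0.ne'
  have hpow1 : t ^ (-γ - 1) = t⁻¹ * w := by
    rw [hwdef, show (-γ - 1 : ℝ) = (-1) + (-γ) by ring, Real.rpow_add ht0,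
      Real.rpow_neg_one]
  have hdu : HasDerivAt (fun s : ℝ => (τ - 1) / (δ + δ * s ^ (-ν))) du t := by
    have h0 := (hasDerivAt_const t (τ - 1)).fun_div hLd hLne
    refine h0.congr_deriv ?_
    rw [hdudef, hNdef, hLdef]
    ring
  have hdv : HasDerivAt (fun s : ℝ => (q₀ x ξ - 1) / (δ + δ * s ^ (-ν))) dv t := by
    have h0 := (hasDerivAt_const t (q₀ x ξ - 1)).fun_div hLd hLne
    refine h0.congr_deriv ?_
    rw [hdvdef, hNdef, hLdef]
    ring
  have hptu : (τ - 1) / (δ + δ * t ^ (-ν)) = u := by rw [hudef, hLdef]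
  have hptv : (q₀ x ξ - 1) / (δ + δ * t ^ (-ν)) = v := by rw [hvdef, hLdef]
  have hXd : HasDerivAt (fun s : ℝ => χ₂ ((τ - 1) / (δ + δ * s ^ (-ν)))) (X' * du) t := by
    have h0 := (hχ₂d ((τ - 1) / (δ + δ * t ^ (-ν)))).hasDerivAt.comp t hdu
    rw [hptu] at h0
    rw [hX'def]
    simpa [Function.comp_def] using h0
  have hYd : HasDerivAt (fun s : ℝ => χ₂ ((q₀ x ξ - 1) / (δ + δ * s ^ (-ν)))) (Y' * dv) t := by
    have h0 := (hχ₂d ((q₀ x ξ - 1) / (δ + δ * t ^ (-ν)))).hasDerivAt.comp t hdv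
    rw [hptv] at h0
    rw [hY'def]
    simpa [Function.comp_def] using h0
  have hz1d : HasDerivAt (fun s : ℝ => χ₁ (-s / T + 1)) (Z1' * (-1 / T)) t := by
    have hin : HasDerivAt (fun s : ℝ => -s / T + 1) (-1 / T) t := by
      simpa using (((hasDerivAt_id t).neg.div_const T).add_const 1)
    have h0 := (hχ₁d (-t / T + 1)).hasDerivAt.comp t hin
    rw [hZ1'def]
    simpa [Function.comp_def] using h0
  set Dt : ℝ := -γ * (t⁻¹ * w) * ((Z1 * X) * Y)
      + w * (((Z1' * (-1 / T)) * X + Z1 * (X' * du)) * Y + (Z1 * X) * (Y' * dv)) with hDtdef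
  have hbig : HasDerivAt (fun s => s ^ (-γ) *
      ((χ₁ (-s / T + 1) * χ₂ ((τ - 1) / (δ + δ * s ^ (-ν)))) *
        χ₂ ((q₀ x ξ - 1) / (δ + δ * s ^ (-ν))))) Dt t := by
    have h0 := hrpw.fun_mul ((hz1d.fun_mul hXd).fun_mul hYd)
    refine h0.congr_deriv ?_
    rw [hDtdef, hptu, hptv, hpow1, ← hXdef, ← hYdef, ← hZ1def, ← hwdef]
  have hderivt : deriv (fun s => b0Out n γ ν δ q₀ χ₁ χ₂ T s x τ ξ) t = Dt :=
    (hbig.congr_of_eventuallyEq hevent).deriv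
  -- the τ-derivative of b₀
  have hfunτ : (fun σ => b0Out n γ ν δ q₀ χ₁ χ₂ T t x σ ξ)
      = (fun σ => w * ((Z1 * χ₂ ((σ - 1) / L)) * Y)) := by
    funext σ
    simp only [b0Out, hlam2, habs, hz1m0, zero_mul, add_zero]
    rfl
  have hDτ : HasDerivAt (fun σ => w * ((Z1 * χ₂ ((σ - 1) / L)) * Y))
      (w * ((Z1 * (X' * (1 / L))) * Y)) τ := by
    have hin : HasDerivAt (fun σ : ℝ => (σ - 1) / L) (1 / L) τ := by
      simpa using ((hasDerivAt_id τ).sub_const 1).div_const L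
    have h0 := (hχ₂d ((τ - 1) / L)).hasDerivAt.comp τ hin
    rw [← hudef, ← hX'def] at h0
    have h2 := ((h0.const_mul Z1).mul_const Y).const_mul w
    simpa [Function.comp_def] using h2
  have hderivτ : deriv (fun σ => b0Out n γ ν δ q₀ χ₁ χ₂ T t x σ ξ) τ
      = w * ((Z1 * (X' * (1 / L))) * Y) := by rw [hfunτ]; exact hDτ.deriv
  -- the x- and ξ-gradients of b₀
  have hscx : HasDerivAt (fun r : ℝ => w * ((Z1 * X) * χ₂ ((r - 1) / L)))
      (w * ((Z1 * X) * (Y' * (1 / L)))) (q₀ x ξ) := by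
    have hin : HasDerivAt (fun r : ℝ => (r - 1) / L) (1 / L) (q₀ x ξ) := by
      simpa using ((hasDerivAt_id (q₀ x ξ)).sub_const 1).div_const L
    have h0 := (hχ₂d ((q₀ x ξ - 1) / L)).hasDerivAt.comp (q₀ x ξ) hin
    rw [← hvdef, ← hY'def] at h0
    have h2 := (h0.const_mul (Z1 * X)).const_mul w
    simpa [Function.comp_def] using h2
  have hfunx : (fun y => b0Out n γ ν δ q₀ χ₁ χ₂ T t y τ ξ)
      = (fun y => w * ((Z1 * X) * χ₂ ((q₀ y ξ - 1) / L))) := by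
    funext y
    simp only [b0Out, hlam2, habs, hz1m0, zero_mul, add_zero]
    rfl
  have hfunξ : (fun η => b0Out n γ ν δ q₀ χ₁ χ₂ T t x τ η)
      = (fun η => w * ((Z1 * X) * χ₂ ((q₀ x η - 1) / L))) := by
    funext η
    simp only [b0Out, hlam2, habs, hz1m0, zero_mul, add_zero]
    rfl
  have hgradx : gradient (fun y => b0Out n γ ν δ q₀ χ₁ χ₂ T t y τ ξ) x
      = (w * ((Z1 * X) * (Y' * (1 / L)))) • Gx := by
    rw [hfunx, hGxdef]
    exact (hasGradientAt_comp_deriv hq₀dx.hasGradientAt hscx).gradient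
  have hgradξ : gradient (fun η => b0Out n γ ν δ q₀ χ₁ χ₂ T t x τ η) ξ
      = (w * ((Z1 * X) * (Y' * (1 / L)))) • Gξ := by
    rw [hfunξ, hGξdef]
    exact (hasGradientAt_comp_deriv hq₀dξ.hasGradientAt hscx).gradient
  -- slices of the symbol a = τ² + q
  have haτ : deriv (fun σ => aKG n q t x σ ξ) τ = P := by
    have hp : HasDerivAt (fun σ : ℝ => σ ^ 2) (2 * τ) τ := by
      simpa using hasDerivAt_pow 2 τ
    have h1 : HasDerivAt (fun σ : ℝ => σ ^ 2 + q t x σ ξ) (2 * τ + qτ') τ := by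
      rw [hqτ'def]
      exact hp.add hqdτ.hasDerivAt
    rw [hPdef]
    exact h1.deriv
  have hat : deriv (fun s => aKG n q s x τ ξ) t = qt' := by
    rw [hqt'def]
    show deriv (fun s => τ ^ 2 + q s x τ ξ) t = _
    rw [deriv_const_add]
  have hax : gradient (fun y => aKG n q t y τ ξ) x = Gqx := by
    rw [hGqxdef]
    show gradient (fun y => τ ^ 2 + q t y τ ξ) x = _
    rw [gradient_const_add']
  have haξ : gradient (fun η => aKG n q t x τ η) ξ = Gqξ := by
    rw [hGqξdef]
    show gradient (fun η => τ ^ 2 + q t x τ η) ξ = _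
    rw [gradient_const_add']
  -- value of the Poisson bracket
  set cc : ℝ := w * ((Z1 * X) * (Y' * (1 / L))) with hccdef
  have hpbval : pb n (aKG n q) (b0Out n γ ν δ q₀ χ₁ χ₂ T) t x τ ξ
      = P * Dt + cc * Ix - qt' * (w * ((Z1 * (X' * (1 / L))) * Y)) - cc * Iξ := by
    simp only [pb]
    rw [haτ, hat, hax, haξ, hderivt, hderivτ, hgradx, hgradξ,
      real_inner_smul_right, real_inner_smul_right, ← hIxdef, ← hIξdef]
  -- value of fTilde
  have hpbz1p : pb n (aKG n q) (zeta1p n χ₁ T) t x τ ξ = P * (Z1' * (-1 / T)) := by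
    simp only [pb, zeta1p]
    rw [haτ, hz1d.deriv, deriv_const, gradient_fun_const, gradient_fun_const,
      inner_zero_right, inner_zero_right]
    ring
  have hz1mderiv : deriv (fun s : ℝ => χ₁ (s / T + 1)) t = 0 := by
    have hin : HasDerivAt (fun s : ℝ => s / T + 1) (1 / T) t := by
      simpa using ((hasDerivAt_id t).div_const T).add_const 1
    have h0 := (hχ₁d (t / T + 1)).hasDerivAt.comp t hin
    have hz0 : deriv χ₁ (t / T + 1) = 0 := by
      refine hχ₁der0 _ ?_
      have := div_nonneg ht0.le hTpos.le
      linarith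
    rw [hz0] at h0
    have := h0.deriv
    simpa [Function.comp_def] using this
  have hpbz1m : pb n (aKG n q) (zeta1m n χ₁ T) t x τ ξ = 0 := by
    simp only [pb, zeta1m]
    rw [hz1mderiv, deriv_const, gradient_fun_const, gradient_fun_const,
      inner_zero_right, inner_zero_right]
    ring
  have hftval : fTilde n γ ν δ q₀ q χ₁ χ₂ T t x τ ξ = P * (Z1' * (-1 / T)) * X * w * Y := by
    simp only [fTilde]
    rw [hpbz1p, hpbz1m, habs, hlam2]
    rw [hwdef, hXdef, hudef, hYdef, hvdef]
    ring
  have hb0val : b0Out n γ ν δ q₀ χ₁ χ₂ T t x τ ξ = w * ((Z1 * X) * Y) := by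
    simp only [b0Out, hlam2, habs, hz1m0, zero_mul, add_zero]
    rfl
  -- nonnegativity and sign lemmas
  have hZ1nn : 0 ≤ Z1 := hχ₁nonneg _
  have hXnn : 0 ≤ X := hχ₂nonneg _
  have hYnn : 0 ≤ Y := hχ₂nonneg _
  have hLne2 : L ≠ 0 := hL0.ne'
  have hdu2 : du = u * (N / L) := by
    rw [hdudef, hudef, div_mul_div_comm, ← sq]
  have hdv2 : dv = v * (N / L) := by
    rw [hdvdef, hvdef, div_mul_div_comm, ← sq]
  have hNL : 0 < N / L := div_pos hN0 hL0
  have hA2 : 0 ≤ P * (γ * (t⁻¹ * w) * ((Z1 * X) * Y)) - γ * (t⁻¹ * w) * ((Z1 * X) * Y) := by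
    have hid : P * (γ * (t⁻¹ * w) * ((Z1 * X) * Y)) - γ * (t⁻¹ * w) * ((Z1 * X) * Y)
        = (P - 1) * (γ * (t⁻¹ * w)) * ((Z1 * X) * Y) := by ring
    rw [hid]
    rcases eq_or_ne Z1 0 with h | hZ
    · rw [h]; simp
    rcases eq_or_ne X 0 with h | hX
    · rw [h]; simp
    rcases eq_or_ne Y 0 with h | hY
    · rw [h]; simp
    have hP := hP1 hZ (hXsupp hX) (hYsupp hY)
    have hpos : 0 ≤ γ * (t⁻¹ * w) :=
      mul_nonneg hγ.le (mul_nonneg (inv_nonneg.2 ht0.le) hw0.le)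
    exact mul_nonneg (mul_nonneg (by linarith only [hP]) hpos)
      (mul_nonneg (mul_nonneg hZ1nn hXnn) hYnn)
  have hS2 : 0 ≤ w * Z1 * Y * (qt' * (X' * (1 / L)) - P * (X' * du)) := by
    rcases eq_or_ne Z1 0 with h | hZ
    · rw [h]; simp
    rcases eq_or_ne Y 0 with h | hYne
    · rw [h]; simp
    rcases eq_or_ne X' 0 with h | hX'ne
    · rw [h]; simp
    obtain ⟨hu1, hu2⟩ := hX'supp hX'ne
    have hP := hP1 hZ hu2 (hYsupp hYne)
    have hqt := hqt'N hZ hu2 (hYsupp hYne)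
    have hmon := hχ₂mono u
    rw [← hX'def] at hmon
    have huX : u * X' ≤ -|X'| := by
      have h2 : u * X' = -|u * X'| := by rw [abs_of_nonpos hmon]; ring
      rw [h2, abs_mul]
      nlinarith only [hu1, abs_nonneg X']
    have hXdu : X' * du ≤ -(|X'| * (N / L)) := by
      rw [hdu2]
      calc X' * (u * (N / L)) = (u * X') * (N / L) := by ring
        _ ≤ (-|X'|) * (N / L) := mul_le_mul_of_nonneg_right huX hNL.le
        _ = -(|X'| * (N / L)) := by ring
    have hterm1 : |X'| * (N / L) ≤ -(P * (X' * du)) := by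
      clear_value P du N L X'
      have h3 : 0 ≤ -(X' * du) := by
        nlinarith only [hXdu, mul_nonneg (abs_nonneg X') hNL.le]
      nlinarith only [hXdu, h3, mul_nonneg (sub_nonneg.2 hP) h3]
    have hterm2 : -(|X'| * (N / L)) ≤ qt' * (X' * (1 / L)) := by
      have h4 : |qt' * (X' * (1 / L))| = |qt'| * (|X'| * (1 / L)) := by
        rw [abs_mul, abs_mul, abs_of_pos (one_div_pos.2 hL0)]
      have h5 := neg_abs_le (qt' * (X' * (1 / L)))
      rw [h4] at h5
      have h6 : |qt'| * (|X'| * (1 / L)) ≤ N * (|X'| * (1 / L)) :=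
        mul_le_mul_of_nonneg_right hqt
          (mul_nonneg (abs_nonneg _) (one_div_nonneg.2 hL0.le))
      have h7 : N * (|X'| * (1 / L)) = |X'| * (N / L) := by ring
      linarith only [h5, h6, h7]
    have hinner : 0 ≤ qt' * (X' * (1 / L)) - P * (X' * du) := by
      linarith only [hterm1, hterm2]
    exact mul_nonneg (mul_nonneg (mul_nonneg hw0.le hZ1nn) hYnn) hinner
  have hS3 : 0 ≤ w * Z1 * X * ((Iξ - Ix) * (Y' * (1 / L)) - P * (Y' * dv)) := by
    rcases eq_or_ne Z1 0 with h | hZ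
    · rw [h]; simp
    rcases eq_or_ne X 0 with h | hXne
    · rw [h]; simp
    rcases eq_or_ne Y' 0 with h | hY'ne
    · rw [h]; simp
    obtain ⟨hv1, hv2⟩ := hY'supp hY'ne
    have hu2 := hXsupp hXne
    have hP := hP1 hZ hu2 hv2
    have hIb := hIbound hZ hu2 hv2
    have hmon := hχ₂mono v
    rw [← hY'def] at hmon
    have hvY : v * Y' ≤ -|Y'| := by
      have h2 : v * Y' = -|v * Y'| := by rw [abs_of_nonpos hmon]; ring
      rw [h2, abs_mul]
      nlinarith only [hv1, abs_nonneg Y']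
    have hYdv : Y' * dv ≤ -(|Y'| * (N / L)) := by
      rw [hdv2]
      calc Y' * (v * (N / L)) = (v * Y') * (N / L) := by ring
        _ ≤ (-|Y'|) * (N / L) := mul_le_mul_of_nonneg_right hvY hNL.le
        _ = -(|Y'| * (N / L)) := by ring
    have hterm1 : |Y'| * (N / L) ≤ -(P * (Y' * dv)) := by
      clear_value P dv N L Y'
      have h3 : 0 ≤ -(Y' * dv) := by
        nlinarith only [hYdv, mul_nonneg (abs_nonneg Y') hNL.le]
      nlinarith only [hYdv, h3, mul_nonneg (sub_nonneg.2 hP) h3]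
    have hterm2 : -(|Y'| * (N / L)) ≤ (Iξ - Ix) * (Y' * (1 / L)) := by
      have h4 : |(Iξ - Ix) * (Y' * (1 / L))| = |Iξ - Ix| * (|Y'| * (1 / L)) := by
        rw [abs_mul, abs_mul, abs_of_pos (one_div_pos.2 hL0)]
      have h5 := neg_abs_le ((Iξ - Ix) * (Y' * (1 / L)))
      rw [h4] at h5
      have h8 : |Iξ - Ix| ≤ N := by linarith only [abs_sub Iξ Ix, hIb]
      have h6 : |Iξ - Ix| * (|Y'| * (1 / L)) ≤ N * (|Y'| * (1 / L)) :=
        mul_le_mul_of_nonneg_right h8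
          (mul_nonneg (abs_nonneg _) (one_div_nonneg.2 hL0.le))
      have h7 : N * (|Y'| * (1 / L)) = |Y'| * (N / L) := by ring
      linarith only [h5, h6, h7]
    have hinner : 0 ≤ (Iξ - Ix) * (Y' * (1 / L)) - P * (Y' * dv) := by
      linarith only [hterm1, hterm2]
    exact mul_nonneg (mul_nonneg (mul_nonneg hw0.le hZ1nn) hXnn) hinner
  -- final assembly
  rw [hb0val, hftval, hpbval]
  have hid2 : -(P * Dt + cc * Ix - qt' * (w * ((Z1 * (X' * (1 / L))) * Y)) - cc * Iξ)
      = (γ * t⁻¹ * (w * ((Z1 * X) * Y)) - P * (Z1' * (-1 / T)) * X * w * Y)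
        + ((P * (γ * (t⁻¹ * w) * ((Z1 * X) * Y)) - γ * (t⁻¹ * w) * ((Z1 * X) * Y))
          + (w * Z1 * Y * (qt' * (X' * (1 / L)) - P * (X' * du)))
          + (w * Z1 * X * ((Iξ - Ix) * (Y' * (1 / L)) - P * (Y' * dv)))) := by
    rw [hDtdef, hccdef]
    ring
  rw [hid2]
  linarith only [hA2, hS2, hS3]




set_option maxHeartbeats 1600000 in
/-- symbol-level content of Lemma 2.7: the outgoing escape symbol `b₀` is
monotone along the Hamilton flow of `τ² + q` up to a bounded error `f̃` supported in the time
shell `T ≤ |t| ≤ 2T`: there are `c₀′ > 0`, `C′ > 0` and `T₀ ≥ 1` such that for every `T ≥ T₀`,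
(i) `f̃ = 0` unless `T ≤ |t| ≤ 2T`; (ii) `|f̃| ≤ C′` for `|t| ≥ 1`; and (iii)
`−{τ² + q, b₀} ≥ c₀′|t|⁻¹ b₀ − f̃` for `|t| ≥ 1`. -/
theorem stmt14 (n : ℕ) (hn : 1 ≤ n) (μ C C₀ c₀ γ ν δ : ℝ) (hμ : 0 < μ) (hC : 0 < C)
    (hC₀ : 0 < C₀) (hc₀ : 0 < c₀) (hγ : 0 < γ) (hν : 0 < ν) (hνμ : ν < μ)
    (hδ : 0 < δ) (hδ' : δ ≤ 1 / 16)
    (q₀ : En n → En n → ℝ)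
    (hq₀smooth : ContDiff ℝ (⊤ : ℕ∞) (fun v : En n × En n => q₀ v.1 v.2))
    (hq₀ell : ∀ x ξ, c₀ * ‖ξ‖ ^ 2 ≤ q₀ x ξ) (hq₀ub : ∀ x ξ, q₀ x ξ ≤ C₀ * ‖ξ‖ ^ 2)
    (hdxq₀ : ∀ x ξ, ‖gradient (fun y => q₀ y ξ) x‖ ≤ C₀ * ‖ξ‖ ^ 2)
    (hdξq₀ : ∀ x ξ, ‖gradient (fun η => q₀ x η) ξ‖ ≤ C₀ * ‖ξ‖)
    (q : ℝ → En n → ℝ → En n → ℝ)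
    (hqsmooth : ContDiff ℝ (⊤ : ℕ∞) (fun v : ℝ × En n × ℝ × En n => q v.1 v.2.1 v.2.2.1 v.2.2.2))
    (hdtxq : ∀ t x τ ξ, |deriv (fun s => q s x τ ξ) t| + ‖gradient (fun y => q t y τ ξ) x‖
      ≤ C * jap t ^ (-1 - μ) * (τ ^ 2 + ‖ξ‖ ^ 2))
    (hdτξq : ∀ t x τ ξ, |deriv (fun σ => q t x σ ξ) τ| + ‖gradient (fun η => q t x τ η) ξ‖
      ≤ C * jap t ^ (-1 - μ) * (|τ| + ‖ξ‖))
    (χ₁ : ℝ → ℝ) (hχ₁smooth : ContDiff ℝ (⊤ : ℕ∞) χ₁)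
    (hχ₁one : ∀ s ≤ (-1 : ℝ), χ₁ s = 1) (hχ₁zero : ∀ s ≥ (0 : ℝ), χ₁ s = 0)
    (hχ₁mono : ∀ s, deriv χ₁ s ≤ 0)
    (χ₂ : ℝ → ℝ) (hχ₂smooth : ContDiff ℝ (⊤ : ℕ∞) χ₂)
    (hχ₂one : ∀ s : ℝ, |s| ≤ 1 → χ₂ s = 1) (hχ₂zero : ∀ s : ℝ, 2 ≤ |s| → χ₂ s = 0)
    (hχ₂mono : ∀ s, s * deriv χ₂ s ≤ 0) :
    ∃ c₀' > (0 : ℝ), ∃ C' > (0 : ℝ), ∃ T₀ ≥ (1 : ℝ), ∀ T ≥ T₀,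
      (∀ (t : ℝ) (x : En n) (τ : ℝ) (ξ : En n), ¬(T ≤ |t| ∧ |t| ≤ 2 * T) →
        fTilde n γ ν δ q₀ q χ₁ χ₂ T t x τ ξ = 0) ∧
      (∀ (t : ℝ) (x : En n) (τ : ℝ) (ξ : En n), 1 ≤ |t| →
        |fTilde n γ ν δ q₀ q χ₁ χ₂ T t x τ ξ| ≤ C') ∧
      (∀ (t : ℝ) (x : En n) (τ : ℝ) (ξ : En n), 1 ≤ |t| →
        c₀' * |t|⁻¹ * b0Out n γ ν δ q₀ χ₁ χ₂ T t x τ ξ - fTilde n γ ν δ q₀ q χ₁ χ₂ T t x τ ξ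
          ≤ -pb n (aKG n q) (b0Out n γ ν δ q₀ χ₁ χ₂ T) t x τ ξ) := by
  -- basic consequences of the cutoff hypotheses
  have hχ₁d : Differentiable ℝ χ₁ := hχ₁smooth.differentiable (by simp)
  have hχ₂d : Differentiable ℝ χ₂ := hχ₂smooth.differentiable (by simp)
  have hχ₁dc : Continuous (deriv χ₁) := hχ₁smooth.continuous_deriv (by simp)
  have hχ₁anti : Antitone χ₁ := antitone_of_deriv_nonpos hχ₁d hχ₁mono
  have hχ₁nonneg : ∀ s, 0 ≤ χ₁ s := by
    intro s
    rcases le_or_gt s 0 with h | h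
    · rw [← hχ₁zero 0 le_rfl]; exact hχ₁anti h
    · rw [hχ₁zero s h.le]
  have hχ₂anti : AntitoneOn χ₂ (Set.Ici 0) := by
    refine antitoneOn_of_deriv_nonpos (convex_Ici 0) hχ₂d.continuous.continuousOn
      hχ₂d.differentiableOn ?_
    intro s hs
    rw [interior_Ici] at hs
    by_contra hd
    push_neg at hd
    nlinarith only [hχ₂mono s, mul_pos (Set.mem_Ioi.1 hs) hd]
  have hχ₂monoOn : MonotoneOn χ₂ (Set.Iic 0) := by
    refine monotoneOn_of_deriv_nonneg (convex_Iic 0) hχ₂d.continuous.continuousOn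
      hχ₂d.differentiableOn ?_
    intro s hs
    rw [interior_Iic] at hs
    by_contra hd
    push_neg at hd
    nlinarith only [hχ₂mono s, Set.mem_Iio.1 hs, mul_pos_of_neg_of_neg (Set.mem_Iio.1 hs) hd]
  have hχ₂nonneg : ∀ s, 0 ≤ χ₂ s := by
    intro s
    rcases le_or_gt 0 s with h | h
    · rcases le_or_gt s 2 with h2 | h2
      · rw [← hχ₂zero 2 (by norm_num)]
        exact hχ₂anti (Set.mem_Ici.2 h) (Set.mem_Ici.2 (by norm_num)) h2
      · rw [hχ₂zero s (by rw [abs_of_pos (by linarith)]; linarith)]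
    · rcases le_or_gt (-2) s with h2 | h2
      · rw [← hχ₂zero (-2) (by norm_num)]
        exact hχ₂monoOn (Set.mem_Iic.2 (by norm_num)) (Set.mem_Iic.2 h.le) h2
      · rw [hχ₂zero s (by rw [abs_of_neg (by linarith)]; linarith)]
  have hχ₂le1 : ∀ s, χ₂ s ≤ 1 := by
    intro s
    rcases le_or_gt 0 s with h | h
    · rw [← hχ₂one 0 (by norm_num)]
      exact hχ₂anti (Set.mem_Ici.2 le_rfl) (Set.mem_Ici.2 h) h
    · rw [← hχ₂one 0 (by norm_num)]
      exact hχ₂monoOn (Set.mem_Iic.2 h.le) (Set.mem_Iic.2 le_rfl) h.le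
  have hχ₁dIic : ∀ s : ℝ, s ≤ -1 → deriv χ₁ s = 0 := by
    intro s hs
    refine deriv_zero_of_const_on_open (U := Set.Iio (-1:ℝ)) hχ₁dc isOpen_Iio 1
      (fun r hr => hχ₁one r (le_of_lt hr)) ?_
    rw [closure_Iio]; exact hs
  have hχ₁dIci : ∀ s : ℝ, 0 ≤ s → deriv χ₁ s = 0 := by
    intro s hs
    refine deriv_zero_of_const_on_open (U := Set.Ioi (0:ℝ)) hχ₁dc isOpen_Ioi 0
      (fun r hr => hχ₁zero r (le_of_lt hr)) ?_
    rw [closure_Ioi]; exact hs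
  obtain ⟨M₁, hM₁0, hM₁⟩ := bounded_of_zero_outside hχ₁dc (-1) 0 (by
    intro s hs
    simp only [Set.mem_Icc, not_and_or, not_le] at hs
    rcases hs with h | h
    · exact hχ₁dIic s (by linarith)
    · exact hχ₁dIci s (by linarith))
  have hqdiff := hqsmooth.differentiable (by simp)
  have hKc0 : (0:ℝ) < Kc c₀ := by
    rw [Kc, Bc]; positivity
  have hD10 : (0:ℝ) ≤ (5/2 + C * Kc c₀) * M₁ :=
    mul_nonneg (by nlinarith only [mul_pos hC hKc0]) hM₁0.le
  have hC'0 : (0:ℝ) < 2 * ((5/2 + C * Kc c₀) * M₁) + 1 := by linarith only [hD10]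
  refine ⟨γ, hγ, 2 * ((5/2 + C * Kc c₀) * M₁) + 1, hC'0, T0c C C₀ c₀ μ ν δ,
    le_trans (le_max_left 1 (2 * C * Kc c₀)) (le_max_left _ _), fun T hT => ?_⟩
  have hT1 : (1:ℝ) ≤ T :=
    le_trans (le_trans (le_max_left 1 (2 * C * Kc c₀)) (le_max_left _ _)) hT
  have hTpos : (0:ℝ) < T := lt_of_lt_of_le one_pos hT1
  -- general slice derivatives
  have haτ : ∀ (t : ℝ) (x : En n) (τ : ℝ) (ξ : En n),
      deriv (fun σ => aKG n q t x σ ξ) τ = 2 * τ + deriv (fun σ => q t x σ ξ) τ := by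
    intro t x τ ξ
    have hqdτ : DifferentiableAt ℝ (fun σ => q t x σ ξ) τ := by
      have h := hqdiff.comp (Differentiable.prodMk (differentiable_const t)
        (Differentiable.prodMk (differentiable_const x)
          (Differentiable.prodMk differentiable_id (differentiable_const ξ))))
      simpa [Function.comp_def] using h τ
    have hp : HasDerivAt (fun σ : ℝ => σ ^ 2) (2 * τ) τ := by
      simpa using hasDerivAt_pow 2 τ
    exact (hp.add hqdτ.hasDerivAt).deriv
  have hpb1 : ∀ (t : ℝ) (x : En n) (τ : ℝ) (ξ : En n),
      pb n (aKG n q) (zeta1p n χ₁ T) t x τ ξ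
      = (2 * τ + deriv (fun σ => q t x σ ξ) τ) * (deriv χ₁ (-t / T + 1) * (-1 / T)) := by
    intro t x τ ξ
    have hz1d : HasDerivAt (fun s : ℝ => χ₁ (-s / T + 1)) (deriv χ₁ (-t / T + 1) * (-1 / T)) t := by
      have hin : HasDerivAt (fun s : ℝ => -s / T + 1) (-1 / T) t := by
        simpa using (((hasDerivAt_id t).neg.div_const T).add_const 1)
      have h0 := (hχ₁d (-t / T + 1)).hasDerivAt.comp t hin
      simpa [Function.comp_def] using h0
    simp only [pb, zeta1p]
    rw [haτ t x τ ξ, hz1d.deriv, deriv_const, gradient_fun_const, gradient_fun_const,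
      inner_zero_right, inner_zero_right]
    ring
  have hpb2 : ∀ (t : ℝ) (x : En n) (τ : ℝ) (ξ : En n),
      pb n (aKG n q) (zeta1m n χ₁ T) t x τ ξ
      = (2 * τ + deriv (fun σ => q t x σ ξ) τ) * (deriv χ₁ (t / T + 1) * (1 / T)) := by
    intro t x τ ξ
    have hz1d : HasDerivAt (fun s : ℝ => χ₁ (s / T + 1)) (deriv χ₁ (t / T + 1) * (1 / T)) t := by
      have hin : HasDerivAt (fun s : ℝ => s / T + 1) (1 / T) t := by
        simpa using ((hasDerivAt_id t).div_const T).add_const 1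
      have h0 := (hχ₁d (t / T + 1)).hasDerivAt.comp t hin
      simpa [Function.comp_def] using h0
    simp only [pb, zeta1m]
    rw [haτ t x τ ξ, hz1d.deriv, deriv_const, gradient_fun_const, gradient_fun_const,
      inner_zero_right, inner_zero_right]
    ring
  have hz1pzero : ∀ t : ℝ, t ≤ T ∨ 2 * T ≤ t → deriv χ₁ (-t / T + 1) = 0 := by
    intro t h
    rcases h with h | h
    · refine hχ₁dIci _ ?_
      have h2 : t / T ≤ 1 := (div_le_one hTpos).2 h
      rw [neg_div]; linarith
    · refine hχ₁dIic _ ?_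
      have h2 : 2 ≤ t / T := (le_div_iff₀ hTpos).2 (by linarith)
      rw [neg_div]; linarith
  have hz1mzero : ∀ t : ℝ, -T ≤ t ∨ t ≤ -2 * T → deriv χ₁ (t / T + 1) = 0 := by
    intro t h
    rcases h with h | h
    · refine hχ₁dIci _ ?_
      have h2 : -1 ≤ t / T := (le_div_iff₀ hTpos).2 (by linarith)
      linarith
    · refine hχ₁dIic _ ?_
      have h2 : t / T ≤ -2 := (div_le_iff₀ hTpos).2 (by linarith)
      linarith
  refine ⟨?_, ?_, ?_⟩
  · -- part (i): support of fTilde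
    intro t x τ ξ hnot
    have hcond : (t ≤ T ∨ 2 * T ≤ t) ∧ (-T ≤ t ∨ t ≤ -2 * T) := by
      push_neg at hnot
      rcases lt_or_ge |t| T with hc | hc
      · have h2 := abs_lt.1 hc
        exact ⟨Or.inl h2.2.le, Or.inl h2.1.le⟩
      · have hc2 := hnot hc
        rcases abs_cases t with ⟨he, hsgn⟩ | ⟨he, hsgn⟩
        · rw [he] at hc2
          exact ⟨Or.inr (by linarith), Or.inl (by linarith)⟩
        · rw [he] at hc2
          exact ⟨Or.inl (by linarith), Or.inr (by linarith)⟩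
    simp only [fTilde]
    rw [hpb1, hpb2, hz1pzero t hcond.1, hz1mzero t hcond.2]
    ring
  · -- part (ii): uniform bound
    intro t x τ ξ ht
    have hw1 : |t| ^ (-γ) ≤ 1 := Real.rpow_le_one_of_one_le_of_nonpos ht (by linarith)
    have hw0 : (0:ℝ) ≤ |t| ^ (-γ) := Real.rpow_nonneg (abs_nonneg t) _
    have hb1 : |t| ^ (-ν) ≤ 1 := Real.rpow_le_one_of_one_le_of_nonpos ht (by linarith)
    have hb0 : (0:ℝ) ≤ |t| ^ (-ν) := Real.rpow_nonneg (abs_nonneg t) _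
    have hL0 : 0 < lamOut δ ν t := by rw [lamOut]; nlinarith only [hδ, hb0]
    have hL2δ : lamOut δ ν t ≤ 2 * δ := by rw [lamOut]; nlinarith only [hδ, hb1]
    have hjap1 : jap t ^ (-1 - μ) ≤ 1 :=
      Real.rpow_le_one_of_one_le_of_nonpos (one_le_jap t) (by linarith)
    have hjap0 : (0:ℝ) ≤ jap t ^ (-1 - μ) :=
      Real.rpow_nonneg (by linarith [one_le_jap t]) _
    simp only [fTilde]
    rw [hpb1, hpb2]
    rcases eq_or_ne (χ₂ ((q₀ x ξ - 1) / lamOut δ ν t)) 0 with hY | hY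
    · rw [hY, mul_zero, abs_zero]; exact hC'0.le
    have hvle : |(q₀ x ξ - 1) / lamOut δ ν t| ≤ 2 := by
      by_contra hc; push_neg at hc; exact hY (hχ₂zero _ hc.le)
    have hq2 : q₀ x ξ ≤ 2 := by
      have h1 : |q₀ x ξ - 1| ≤ 2 * lamOut δ ν t := by
        rw [abs_div, abs_of_pos hL0] at hvle
        have := (div_le_iff₀ hL0).1 hvle
        linarith
      have h2 := (abs_le.1 h1).2
      linarith
    have hξB : ‖ξ‖ ≤ Bc c₀ := by
      have h3 : ‖ξ‖ ^ 2 ≤ 2 / c₀ := by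
        have h3' := hq₀ell x ξ
        rw [le_div_iff₀ hc₀]
        nlinarith only [h3', hq2]
      rw [Bc]
      calc ‖ξ‖ = Real.sqrt (‖ξ‖ ^ 2) := (Real.sqrt_sq (norm_nonneg ξ)).symm
        _ ≤ Real.sqrt (2 / c₀) := Real.sqrt_le_sqrt h3
    have hqτ'b : |deriv (fun σ => q t x σ ξ) τ| ≤ C * (|τ| + ‖ξ‖) := by
      have h4 := hdτξq t x τ ξ
      have p2 : (0:ℝ) ≤ |τ| + ‖ξ‖ := by positivity
      have h5 : C * jap t ^ (-1 - μ) * (|τ| + ‖ξ‖) ≤ C * 1 * (|τ| + ‖ξ‖) :=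
        mul_le_mul_of_nonneg_right (mul_le_mul_of_nonneg_left hjap1 hC.le) p2
      have h6 := norm_nonneg (gradient (fun η => q t x τ η) ξ)
      calc |deriv (fun σ => q t x σ ξ) τ| ≤ C * jap t ^ (-1 - μ) * (|τ| + ‖ξ‖) := by
            linarith only [h4, h6]
        _ ≤ C * 1 * (|τ| + ‖ξ‖) := h5
        _ = C * (|τ| + ‖ξ‖) := by ring
    have hfacb : ∀ τu : ℝ, |τu| ≤ 5/4 → τu = τ →
        |2 * τ + deriv (fun σ => q t x σ ξ) τ| ≤ 5/2 + C * Kc c₀ := by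
      intro τu hτu hequ
      subst hequ
      have h5 := abs_add_le (2 * τu) (deriv (fun σ => q t x σ ξ) τu)
      have h6 : |2 * τu| ≤ 5/2 := by
        rw [abs_mul, abs_two]; linarith
      have h7 : C * (|τu| + ‖ξ‖) ≤ C * Kc c₀ := by
        refine mul_le_mul_of_nonneg_left ?_ hC.le
        rw [Kc]; linarith only [hτu, hξB]
      linarith only [h5, h6, h7, hqτ'b]
    set E1 : ℝ := (2 * τ + deriv (fun σ => q t x σ ξ) τ) * (deriv χ₁ (-t / T + 1) * (-1 / T))
      * χ₂ ((τ - 1) / lamOut δ ν t) with hE1def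
    set E2 : ℝ := (2 * τ + deriv (fun σ => q t x σ ξ) τ) * (deriv χ₁ (t / T + 1) * (1 / T))
      * χ₂ ((-τ - 1) / lamOut δ ν t) with hE2def
    have hterm1 : |E1| ≤ (5/2 + C * Kc c₀) * M₁ := by
      rw [hE1def]
      rcases eq_or_ne (χ₂ ((τ - 1) / lamOut δ ν t)) 0 with hX | hX
      · rw [hX, mul_zero, abs_zero]; exact hD10
      have hule : |(τ - 1) / lamOut δ ν t| ≤ 2 := by
        by_contra hc; push_neg at hc; exact hX (hχ₂zero _ hc.le)
      have hτ54 : |τ| ≤ 5/4 := by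
        have h1 : |τ - 1| ≤ 2 * lamOut δ ν t := by
          rw [abs_div, abs_of_pos hL0] at hule
          have := (div_le_iff₀ hL0).1 hule
          linarith
        have h2 := abs_le.1 h1
        rw [abs_le]
        constructor <;> nlinarith only [h2.1, h2.2, hL2δ, hδ']
      have hfac := hfacb τ hτ54 rfl
      have hd1 : |deriv χ₁ (-t / T + 1) * (-1 / T)| ≤ M₁ := by
        rw [abs_mul]
        have h8 : |(-1 : ℝ) / T| ≤ 1 := by
          rw [abs_div, abs_neg, abs_one, abs_of_pos hTpos, div_le_one hTpos]
          exact hT1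
        have h9 := hM₁ (-t / T + 1)
        nlinarith only [h8, h9, abs_nonneg (deriv χ₁ (-t / T + 1)),
          abs_nonneg ((-1 : ℝ) / T), hM₁0]
      have h10 : |χ₂ ((τ - 1) / lamOut δ ν t)| ≤ 1 := by
        rw [abs_of_nonneg (hχ₂nonneg _)]; exact hχ₂le1 _
      calc |(2 * τ + deriv (fun σ => q t x σ ξ) τ) * (deriv χ₁ (-t / T + 1) * (-1 / T))
          * χ₂ ((τ - 1) / lamOut δ ν t)|
          = |2 * τ + deriv (fun σ => q t x σ ξ) τ| * |deriv χ₁ (-t / T + 1) * (-1 / T)|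
            * |χ₂ ((τ - 1) / lamOut δ ν t)| := by rw [abs_mul, abs_mul]
        _ ≤ (5/2 + C * Kc c₀) * M₁ * 1 := by
            refine mul_le_mul (mul_le_mul hfac hd1 (abs_nonneg _)
              (by nlinarith only [mul_pos hC hKc0])) h10 (abs_nonneg _) hD10
        _ = (5/2 + C * Kc c₀) * M₁ := mul_one _
    have hterm2 : |E2| ≤ (5/2 + C * Kc c₀) * M₁ := by
      rw [hE2def]
      rcases eq_or_ne (χ₂ ((-τ - 1) / lamOut δ ν t)) 0 with hX | hX
      · rw [hX, mul_zero, abs_zero]; exact hD10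
      have hule : |(-τ - 1) / lamOut δ ν t| ≤ 2 := by
        by_contra hc; push_neg at hc; exact hX (hχ₂zero _ hc.le)
      have hτ54 : |τ| ≤ 5/4 := by
        have h1 : |-τ - 1| ≤ 2 * lamOut δ ν t := by
          rw [abs_div, abs_of_pos hL0] at hule
          have := (div_le_iff₀ hL0).1 hule
          linarith
        have h2 := abs_le.1 h1
        rw [abs_le]
        constructor <;> nlinarith only [h2.1, h2.2, hL2δ, hδ']
      have hfac := hfacb τ hτ54 rfl
      have hd1 : |deriv χ₁ (t / T + 1) * (1 / T)| ≤ M₁ := by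
        rw [abs_mul]
        have h8 : |(1 : ℝ) / T| ≤ 1 := by
          rw [abs_div, abs_one, abs_of_pos hTpos, div_le_one hTpos]
          exact hT1
        have h9 := hM₁ (t / T + 1)
        nlinarith only [h8, h9, abs_nonneg (deriv χ₁ (t / T + 1)),
          abs_nonneg ((1 : ℝ) / T), hM₁0]
      have h10 : |χ₂ ((-τ - 1) / lamOut δ ν t)| ≤ 1 := by
        rw [abs_of_nonneg (hχ₂nonneg _)]; exact hχ₂le1 _
      calc |(2 * τ + deriv (fun σ => q t x σ ξ) τ) * (deriv χ₁ (t / T + 1) * (1 / T))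
          * χ₂ ((-τ - 1) / lamOut δ ν t)|
          = |2 * τ + deriv (fun σ => q t x σ ξ) τ| * |deriv χ₁ (t / T + 1) * (1 / T)|
            * |χ₂ ((-τ - 1) / lamOut δ ν t)| := by rw [abs_mul, abs_mul]
        _ ≤ (5/2 + C * Kc c₀) * M₁ * 1 := by
            refine mul_le_mul (mul_le_mul hfac hd1 (abs_nonneg _)
              (by nlinarith only [mul_pos hC hKc0])) h10 (abs_nonneg _) hD10
        _ = (5/2 + C * Kc c₀) * M₁ := mul_one _
    have ha : |E1 + E2| ≤ 2 * ((5/2 + C * Kc c₀) * M₁) := by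
      have h11 := abs_add_le E1 E2
      linarith only [h11, hterm1, hterm2]
    have h12 : |χ₂ ((q₀ x ξ - 1) / lamOut δ ν t)| ≤ 1 := by
      rw [abs_of_nonneg (hχ₂nonneg _)]; exact hχ₂le1 _
    calc |(E1 + E2) * |t| ^ (-γ) * χ₂ ((q₀ x ξ - 1) / lamOut δ ν t)|
        = |E1 + E2| * |t| ^ (-γ) * |χ₂ ((q₀ x ξ - 1) / lamOut δ ν t)| := by
          rw [abs_mul, abs_mul, abs_of_nonneg hw0]
      _ ≤ 2 * ((5/2 + C * Kc c₀) * M₁) * 1 * 1 := by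
          refine mul_le_mul (mul_le_mul ha hw1 hw0 (by linarith only [hD10])) h12
            (abs_nonneg _) (by linarith only [hD10])
      _ ≤ 2 * ((5/2 + C * Kc c₀) * M₁) + 1 := by linarith only [hD10]
  · -- part (iii): monotonicity inequality
    intro t x τ ξ ht
    rcases le_or_gt 1 t with hpos | h1
    · have habs : |t| = t := abs_of_pos (by linarith)
      rw [habs]
      exact key n μ C C₀ c₀ γ ν δ hμ hC hC₀ hc₀ hγ hν hνμ hδ hδ' q₀ hq₀smooth hq₀ell
        hdxq₀ hdξq₀ q hqsmooth hdtxq hdτξq χ₁ hχ₁smooth hχ₁zero hχ₁nonneg χ₂ hχ₂smooth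
        hχ₂one hχ₂zero hχ₂mono hχ₂nonneg T hT t x τ ξ hpos
    · have hneg : t ≤ -1 := by
        rcases abs_cases t with ⟨he, hsgn⟩ | ⟨he, hsgn⟩
        · rw [he] at ht; linarith
        · rw [he] at ht; linarith
      set Q : ℝ → En n → ℝ → En n → ℝ := fun s y σ η => q (-s) y (-σ) η with hQdef
      have hQsmooth : ContDiff ℝ (⊤ : ℕ∞)
          (fun v : ℝ × En n × ℝ × En n => Q v.1 v.2.1 v.2.2.1 v.2.2.2) := by
        have hm : ContDiff ℝ (⊤ : ℕ∞) (fun v : ℝ × En n × ℝ × En n =>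
            ((-v.1, v.2.1, -v.2.2.1, v.2.2.2) : ℝ × En n × ℝ × En n)) := by
          fun_prop
        exact hqsmooth.comp hm
      have hdtxQ : ∀ t x τ ξ, |deriv (fun s => Q s x τ ξ) t|
          + ‖gradient (fun y => Q t y τ ξ) x‖ ≤ C * jap t ^ (-1 - μ) * (τ ^ 2 + ‖ξ‖ ^ 2) := by
        intro t x τ ξ
        have h := hdtxq (-t) x (-τ) ξ
        have e1 : deriv (fun s => Q s x τ ξ) t = -deriv (fun s => q s x (-τ) ξ) (-t) :=
          deriv_comp_neg (fun s => q s x (-τ) ξ) t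
        have e2 : gradient (fun y => Q t y τ ξ) x = gradient (fun y => q (-t) y (-τ) ξ) x := rfl
        rw [e1, abs_neg, e2, show C * jap t ^ (-1 - μ) * (τ ^ 2 + ‖ξ‖ ^ 2)
          = C * jap (-t) ^ (-1 - μ) * ((-τ) ^ 2 + ‖ξ‖ ^ 2) by rw [jap_neg]; ring]
        exact h
      have hdτξQ : ∀ t x τ ξ, |deriv (fun σ => Q t x σ ξ) τ|
          + ‖gradient (fun η => Q t x τ η) ξ‖ ≤ C * jap t ^ (-1 - μ) * (|τ| + ‖ξ‖) := by
        intro t x τ ξ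
        have h := hdτξq (-t) x (-τ) ξ
        have e1 : deriv (fun σ => Q t x σ ξ) τ = -deriv (fun σ => q (-t) x σ ξ) (-τ) :=
          deriv_comp_neg (fun σ => q (-t) x σ ξ) τ
        have e2 : gradient (fun η => Q t x τ η) ξ = gradient (fun η => q (-t) x (-τ) η) ξ := rfl
        rw [e1, abs_neg, e2, show C * jap t ^ (-1 - μ) * (|τ| + ‖ξ‖)
          = C * jap (-t) ^ (-1 - μ) * (|-τ| + ‖ξ‖) by rw [jap_neg, abs_neg]]
        exact h
      have hakg : (fun s (y : En n) (σ : ℝ) (η : En n) => aKG n q (-s) y (-σ) η) = aKG n Q := by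
        funext s y σ η
        simp only [aKG, neg_sq, hQdef]
      have hzpm : (fun s (y : En n) (σ : ℝ) (η : En n) => zeta1m n χ₁ T (-s) y (-σ) η)
          = zeta1p n χ₁ T := rfl
      have hzmp : (fun s (y : En n) (σ : ℝ) (η : En n) => zeta1p n χ₁ T (-s) y (-σ) η)
          = zeta1m n χ₁ T := by
        funext s y σ η
        simp only [zeta1p, zeta1m, neg_neg]
      have hb0refl : (fun s (y : En n) (σ : ℝ) (η : En n) =>
          b0Out n γ ν δ q₀ χ₁ χ₂ T (-s) y (-σ) η) = b0Out n γ ν δ q₀ χ₁ χ₂ T := by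
        funext s y σ η
        exact b0Out_reflect n γ ν δ q₀ χ₁ χ₂ T s y σ η
      have hk := key n μ C C₀ c₀ γ ν δ hμ hC hC₀ hc₀ hγ hν hνμ hδ hδ' q₀ hq₀smooth hq₀ell
        hdxq₀ hdξq₀ Q hQsmooth hdtxQ hdτξQ χ₁ hχ₁smooth hχ₁zero hχ₁nonneg χ₂ hχ₂smooth
        hχ₂one hχ₂zero hχ₂mono hχ₂nonneg T hT (-t) x (-τ) ξ (by linarith)
      have hpb1r := pb_reflect n (aKG n q) (b0Out n γ ν δ q₀ χ₁ χ₂ T) (-t) x (-τ) ξ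
      rw [hakg, hb0refl, neg_neg, neg_neg] at hpb1r
      have hft1 := pb_reflect n (aKG n q) (zeta1m n χ₁ T) (-t) x (-τ) ξ
      rw [hakg, hzpm, neg_neg, neg_neg] at hft1
      have hft2 := pb_reflect n (aKG n q) (zeta1p n χ₁ T) (-t) x (-τ) ξ
      rw [hakg, hzmp, neg_neg, neg_neg] at hft2
      have hftrefl : fTilde n γ ν δ q₀ Q χ₁ χ₂ T (-t) x (-τ) ξ
          = fTilde n γ ν δ q₀ q χ₁ χ₂ T t x τ ξ := by
        simp only [fTilde]
        rw [hft1, hft2]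
        simp only [lamOut, abs_neg, neg_neg]
        ring
      have hb0eq : b0Out n γ ν δ q₀ χ₁ χ₂ T (-t) x (-τ) ξ
          = b0Out n γ ν δ q₀ χ₁ χ₂ T t x τ ξ := b0Out_reflect n γ ν δ q₀ χ₁ χ₂ T t x τ ξ
      rw [hb0eq, hftrefl, hpb1r] at hk
      have habs : |t| = -t := abs_of_neg (by linarith)
      rw [habs]
      exact hk
end
end
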